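/- arXiv:1603.04981 — 10 statements merged into one kernel-verified Lean document; each statement's English description precedes it below -/
import Mathlib

section
/- d is a metric on 𝓕: for all U, V, W ∈ 𝓕, d(U,V) ≥ 0, d(U,V) = d(V,U), d(U,W) ≤ d(U,V) + d(V,W), and d(U,V) = 0 if and only if U = V. -/
/-- The upset of `A` within `[0,1]^K`: points of `[0,1]^K` dominating some point of `A`. -/
def upset (K : ℕ) (A : Set (Fin K → ℝ)) : Set (Fin K → ℝ) :=
  {x | x ∈ Set.Icc (0 : Fin K → ℝ) 1 ∧ ∃ y ∈ A, y ≤ x}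

/-- Membership in the space `𝓕`: a nonempty Pareto frontier in `[0,1]^K`
(no element dominates a different element) whose upset is closed and convex. -/
def memF (K : ℕ) (V : Set (Fin K → ℝ)) : Prop :=
  V.Nonempty ∧ V ⊆ Set.Icc (0 : Fin K → ℝ) 1 ∧
    (∀ u ∈ V, ∀ v ∈ V, u ≤ v → u = v) ∧
    IsClosed (upset K V) ∧ Convex ℝ (upset K V)

/-- The metric `d` on `𝓕`: Hausdorff distance (for the ℓ∞ norm) between upsets. -/
noncomputable def dF (K : ℕ) (U V : Set (Fin K → ℝ)) : ℝ :=
  Metric.hausdorffDist (upset K U) (upset K V)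

lemma subset_upset {K : ℕ} {V : Set (Fin K → ℝ)} (hV : memF K V) : V ⊆ upset K V :=
  fun v hv => ⟨hV.2.1 hv, v, hv, le_refl v⟩

lemma upset_nonempty {K : ℕ} {V : Set (Fin K → ℝ)} (hV : memF K V) : (upset K V).Nonempty :=
  hV.1.mono (subset_upset hV)

lemma upset_bounded {K : ℕ} (V : Set (Fin K → ℝ)) : Bornology.IsBounded (upset K V) :=
  (Metric.isBounded_Icc (0 : Fin K → ℝ) 1).subset (fun x hx => hx.1)

lemma upset_edist_ne_top {K : ℕ} {U V : Set (Fin K → ℝ)} (hU : memF K U) (hV : memF K V) :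
    EMetric.hausdorffEdist (upset K U) (upset K V) ≠ ⊤ :=
  Metric.hausdorffEdist_ne_top_of_nonempty_of_bounded (upset_nonempty hU) (upset_nonempty hV)
    (upset_bounded U) (upset_bounded V)

lemma eq_of_upset_eq {K : ℕ} {U V : Set (Fin K → ℝ)} (hU : memF K U) (hV : memF K V)
    (h : upset K U = upset K V) : U = V := by
  have key : ∀ A B : Set (Fin K → ℝ), memF K A → memF K B → upset K A = upset K B →
      A ⊆ B := by
    intro A B hA hB hAB a ha
    have haB : a ∈ upset K B := hAB ▸ subset_upset hA ha
    obtain ⟨b, hb, hba⟩ := haB.2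
    have hbA : b ∈ upset K A := hAB ▸ subset_upset hB hb
    obtain ⟨a', ha', ha'b⟩ := hbA.2
    have : a' = a := hA.2.2.1 a' ha' a ha (ha'b.trans hba)
    have hab : b = a := le_antisymm hba (this ▸ ha'b)
    exact hab ▸ hb
  exact Set.Subset.antisymm (key U V hU hV h) (key V U hV hU h.symm)

/-- `d` is a metric on `𝓕`. -/
theorem dF_is_metric {K : ℕ} :
    (∀ U V : Set (Fin K → ℝ), memF K U → memF K V → 0 ≤ dF K U V) ∧
    (∀ U V : Set (Fin K → ℝ), memF K U → memF K V → dF K U V = dF K V U) ∧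
    (∀ U V W : Set (Fin K → ℝ), memF K U → memF K V → memF K W →
      dF K U W ≤ dF K U V + dF K V W) ∧
    (∀ U V : Set (Fin K → ℝ), memF K U → memF K V → (dF K U V = 0 ↔ U = V)) := by
  refine ⟨fun U V _ _ => Metric.hausdorffDist_nonneg, fun U V _ _ => Metric.hausdorffDist_comm,
    fun U V W hU hV hW => Metric.hausdorffDist_triangle (upset_edist_ne_top hU hV),
    fun U V hU hV => ?_⟩
  constructor
  · intro h0
    exact eq_of_upset_eq hU hV
      ((hU.2.2.2.1.hausdorffDist_zero_iff_eq hV.2.2.2.1 (upset_edist_ne_top hU hV)).1 h0)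
  · rintro rfl
    exact Metric.hausdorffDist_self_zero
end

section
/- Every sequence (V_n)_{n∈ℕ} in 𝓕 has a subsequence (V_{n_k})_{k∈ℕ} and a limit V ∈ 𝓕 such that d(V_{n_k}, V) → 0 as k → ∞. -/
/-! Upsets of members of `𝓕` are nonempty compact subsets of the cube `[0,1]^K`, so by Blaschke's
selection theorem (the nonempty compact subsets of a compact set form a compact set for the
Hausdorff metric) a subsequence of them converges to a nonempty compact `L ⊆ [0,1]^K`. Every point
of `L` is a limit of points of the approximating sets and every such limit lies in `L`; hence `L`
inherits convexity and upward closedness within the cube. The minimal points of `L` then form a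
Pareto frontier whose upset is `L`. -/

open Set Metric Filter Topology TopologicalSpace

instance Pi.continuousSup {ι : Type*} {π : ι → Type*} [∀ i, TopologicalSpace (π i)]
    [∀ i, Max (π i)] [∀ i, ContinuousSup (π i)] : ContinuousSup (∀ i, π i) :=
  ⟨continuous_pi fun i => ((continuous_apply i).comp continuous_fst).sup
    ((continuous_apply i).comp continuous_snd)⟩

namespace TopologicalSpace.NonemptyCompacts

theorem isCompact_setOf_subset {α : Type*} [UniformSpace α] [T2Space α] [CompleteSpace α]
    {s : Set α} (hs : IsCompact s) : IsCompact {C : NonemptyCompacts α | (C : Set α) ⊆ s} :=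
  TotallyBounded.isCompact_of_isClosed (totallyBounded_subsets_of_totallyBounded hs.totallyBounded)
    ((Closeds.isClosed_subsets_of_isClosed hs.isClosed).preimage continuous_toCloseds)

variable {α ι : Type*} [MetricSpace α] {l : Filter ι} {C : ι → NonemptyCompacts α}
  {L : NonemptyCompacts α}

theorem mem_of_tendsto [l.NeBot] (hC : Tendsto C l (𝓝 L)) {y : ι → α} {x : α}
    (hy : ∀ i, y i ∈ C i) (hyx : Tendsto y l (𝓝 x)) : x ∈ L := by
  have hdist := (lipschitz_infDist.continuous.tendsto (x, L)).comp (hyx.prodMk_nhds hC)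
  have hzero : infDist x L = 0 :=
    tendsto_nhds_unique hdist (tendsto_const_nhds.congr fun i => (infDist_zero_of_mem (hy i)).symm)
  exact (L.isCompact.isClosed.mem_iff_infDist_zero L.nonempty).2 hzero

theorem exists_tendsto_of_mem (hC : Tendsto C l (𝓝 L)) {x : α} (hx : x ∈ L) :
    ∃ y : ι → α, (∀ i, y i ∈ C i) ∧ Tendsto y l (𝓝 x) := by
  choose y hyC hyx using fun i => (C i).isCompact.exists_infDist_eq_dist (C i).nonempty x
  refine ⟨y, hyC, tendsto_iff_dist_tendsto_zero.2 ?_⟩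
  have hdist : Tendsto (fun i => infDist x (C i)) l (𝓝 (infDist x L)) :=
    ((lipschitz_infDist_set x).continuous.tendsto L).comp hC
  rw [infDist_zero_of_mem hx] at hdist
  simpa only [dist_comm, ← hyx] using hdist

theorem convex_of_tendsto {E : Type*} [NormedAddCommGroup E] [NormedSpace ℝ E] [l.NeBot]
    {C : ι → NonemptyCompacts E} {L : NonemptyCompacts E} (hC : Tendsto C l (𝓝 L))
    (hconv : ∀ i, Convex ℝ (C i : Set E)) : Convex ℝ (L : Set E) := by
  intro x hx z hz a b ha hb hab
  obtain ⟨p, hpC, hpx⟩ := exists_tendsto_of_mem hC hx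
  obtain ⟨q, hqC, hqz⟩ := exists_tendsto_of_mem hC hz
  exact mem_of_tendsto hC (fun i => hconv i (hpC i) (hqC i) ha hb hab)
    ((hpx.const_smul a).add (hqz.const_smul b))

theorem inter_upperClosure_subset_of_tendsto [SemilatticeSup α] [ContinuousSup α] [l.NeBot]
    (hC : Tendsto C l (𝓝 L)) {s : Set α} (hs : SupClosed s) (hCs : ∀ i, (C i : Set α) ⊆ s)
    (hup : ∀ i, s ∩ upperClosure (C i : Set α) ⊆ C i) :
    s ∩ upperClosure (L : Set α) ⊆ L := by
  rintro x ⟨hxs, w, hwL, hwx⟩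
  obtain ⟨y, hyC, hyw⟩ := exists_tendsto_of_mem hC hwL
  have hsup : Tendsto (fun i => y i ⊔ x) l (𝓝 x) := by
    simpa only [sup_of_le_right hwx] using hyw.sup_nhds (tendsto_const_nhds (x := x))
  exact mem_of_tendsto hC
    (fun i => hup i ⟨hs (hCs i (hyC i)) hxs, y i, hyC i, le_sup_left⟩) hsup

end TopologicalSpace.NonemptyCompacts

theorem IsCompact.exists_le_minimal {ι : Type*} [Fintype ι] {S : Set (ι → ℝ)}
    (hS : IsCompact S) {x : ι → ℝ} (hx : x ∈ S) : ∃ m ≤ x, Minimal (· ∈ S) m := by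
  have hsum : Continuous fun z : ι → ℝ => ∑ i, z i :=
    continuous_finsetSum Finset.univ fun i _ => continuous_apply i
  obtain ⟨m, ⟨hmS, hmx⟩, hmin⟩ :=
    (hS.inter_right isClosed_Iic).exists_isMinOn ⟨x, hx, mem_Iic.2 le_rfl⟩ hsum.continuousOn
  refine ⟨m, hmx, hmS, fun y hyS hym => ?_⟩
  have hsum_eq : ∑ i, y i = ∑ i, m i :=
    le_antisymm (Finset.sum_le_sum fun i _ => hym i) (hmin ⟨hyS, hym.trans hmx⟩)
  exact fun i => ((Finset.sum_eq_sum_iff_of_le fun i _ => hym i).1 hsum_eq i (Finset.mem_univ i)).ge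

theorem supClosed_Icc {α : Type*} [Lattice α] (a b : α) : SupClosed (Icc a b) :=
  fun _ hx _ hy => ⟨le_sup_of_le_left hx.1, sup_le hx.2 hy.2⟩

theorem Icc_inter_upperClosure_upset_subset (K : ℕ) (A : Set (Fin K → ℝ)) :
    Icc 0 1 ∩ upperClosure (upset K A) ⊆ upset K A :=
  fun _ ⟨hxI, _, ⟨_, v, hv, hvy⟩, hyx⟩ => ⟨hxI, v, hv, hvy.trans hyx⟩

namespace memF

variable {K : ℕ} {V : Set (Fin K → ℝ)}

theorem upset_nonempty (hV : memF K V) : (upset K V).Nonempty :=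
  let ⟨v, hv⟩ := hV.1
  ⟨v, hV.2.1 hv, v, hv, le_rfl⟩

theorem isCompact_upset (hV : memF K V) : IsCompact (upset K V) :=
  isCompact_Icc.of_isClosed_subset hV.2.2.2.1 fun _ hx => hx.1

end memF

theorem upset_setOf_minimal {K : ℕ} {W : Set (Fin K → ℝ)} (hW : IsCompact W)
    (hWI : W ⊆ Icc 0 1) (hup : Icc 0 1 ∩ upperClosure W ⊆ W) :
    upset K {m | Minimal (· ∈ W) m} = W := by
  refine Subset.antisymm (fun x ⟨hxI, m, hm, hmx⟩ => hup ⟨hxI, m, hm.1, hmx⟩) fun x hx => ?_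
  obtain ⟨m, hmx, hm⟩ := hW.exists_le_minimal hx
  exact ⟨hWI hx, m, hm, hmx⟩

theorem memF_setOf_minimal {K : ℕ} {W : Set (Fin K → ℝ)} (hne : W.Nonempty) (hW : IsCompact W)
    (hconv : Convex ℝ W) (hWI : W ⊆ Icc 0 1) (hup : Icc 0 1 ∩ upperClosure W ⊆ W) :
    memF K {m | Minimal (· ∈ W) m} := by
  have hupset := upset_setOf_minimal hW hWI hup
  obtain ⟨x, hx⟩ := hne
  obtain ⟨m, -, hm⟩ := hW.exists_le_minimal hx
  refine ⟨⟨m, hm⟩, fun v hv => hWI hv.1, fun u hu v hv huv => le_antisymm huv (hv.2 hu.1 huv),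
    ?_, ?_⟩
  · rw [hupset]; exact hW.isClosed
  · rw [hupset]; exact hconv

/-- every sequence in `𝓕` has a subsequence converging in `d` to some
element of `𝓕`. -/
theorem exists_convergent_subsequence {K : ℕ} (Vseq : ℕ → Set (Fin K → ℝ))
    (hmem : ∀ n, memF K (Vseq n)) :
    ∃ φ : ℕ → ℕ, StrictMono φ ∧ ∃ V : Set (Fin K → ℝ), memF K V ∧
      Filter.Tendsto (fun k => dF K (Vseq (φ k)) V) Filter.atTop (nhds 0) := by
  let C : ℕ → NonemptyCompacts (Fin K → ℝ) :=
    fun n => ⟨⟨upset K (Vseq n), (hmem n).isCompact_upset⟩, (hmem n).upset_nonempty⟩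
  have hCI : ∀ n, (C n : Set (Fin K → ℝ)) ⊆ Icc 0 1 := fun n _ hx => hx.1
  obtain ⟨L, hLI, φ, hφ, hlim⟩ :=
    (NonemptyCompacts.isCompact_setOf_subset isCompact_Icc).tendsto_subseq hCI
  have hconv : Convex ℝ (L : Set (Fin K → ℝ)) :=
    NonemptyCompacts.convex_of_tendsto hlim fun k => (hmem (φ k)).2.2.2.2
  have hup : Icc (0 : Fin K → ℝ) 1 ∩ upperClosure (L : Set (Fin K → ℝ)) ⊆ L :=
    NonemptyCompacts.inter_upperClosure_subset_of_tendsto hlim (supClosed_Icc 0 1)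
      (fun k => hCI (φ k)) fun k => Icc_inter_upperClosure_upset_subset K (Vseq (φ k))
  refine ⟨φ, hφ, _, memF_setOf_minimal L.nonempty L.isCompact hconv hLI hup, ?_⟩
  simp only [dF, upset_setOf_minimal L.isCompact hLI hup]
  exact tendsto_iff_dist_tendsto_zero.1 hlim
end

section
/- For any nonempty subsets A and B of [0,1]^K, h(up(A), up(B)) ≤ h(A, B). -/
/-!
If `y ⪯ x` with `x ∈ [0,1]^K` and `b ∈ B ⊆ [0,1]^K`, then the coordinatewise maximum `x ⊔ b`
lies in `up(B)`, and it is no farther from `x = y ⊔ x` than `b` is from `y`, because `· ⊔ x` is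
`1`-Lipschitz for the (solid) `ℓ∞` norm. Hence every point of `up(A)` is as close to `up(B)` as
the point of `A` below it is to `B`, and symmetrically.
-/

open Set Metric Bornology

instance Pi.hasSolidNorm {ι : Type*} [Fintype ι] {E : ι → Type*}
    [∀ i, NormedAddCommGroup (E i)] [∀ i, Lattice (E i)] [∀ i, HasSolidNorm (E i)] :
    HasSolidNorm (∀ i, E i) where
  solid _ y h := (pi_norm_le_iff_of_nonneg (norm_nonneg y)).2 fun i =>
    (HasSolidNorm.solid (h i)).trans (norm_le_pi_norm y i)

theorem dist_sup_le_dist_of_le {α : Type*} [NormedAddCommGroup α] [Lattice α]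
    [IsOrderedAddMonoid α] [HasSolidNorm α] {x y : α} (b : α) (hyx : y ≤ x) :
    dist x (x ⊔ b) ≤ dist y b := by
  simpa [dist_eq_norm, sup_eq_right.2 hyx, sup_comm] using norm_sup_sub_sup_le_norm y b x

theorem Metric.infDist_le_hausdorffDist_of_mem_of_isBounded {α : Type*} [PseudoMetricSpace α]
    {s t : Set α} {x : α} (hx : x ∈ s) (hs : IsBounded s) (ht : IsBounded t) :
    infDist x t ≤ hausdorffDist s t := by
  rcases t.eq_empty_or_nonempty with rfl | htne
  · simp
  · exact infDist_le_hausdorffDist_of_mem hx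
      (hausdorffEDist_ne_top_of_nonempty_of_bounded ⟨x, hx⟩ htne hs ht)

section Upset

variable {K : ℕ} {A B : Set (Fin K → ℝ)}

@[simp]
theorem upset_empty : upset K ∅ = ∅ := by
  simp [upset]

theorem sup_mem_upset {x b : Fin K → ℝ} (hx : x ∈ Icc 0 1) (hb1 : b ≤ 1) (hbB : b ∈ B) :
    x ⊔ b ∈ upset K B :=
  ⟨⟨hx.1.trans le_sup_left, sup_le hx.2 hb1⟩, b, hbB, le_sup_right⟩

theorem infDist_upset_le_infDist (hB : B ⊆ Icc 0 1) {x y : Fin K → ℝ} (hx : x ∈ Icc 0 1)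
    (hyx : y ≤ x) : infDist x (upset K B) ≤ infDist y B := by
  rcases B.eq_empty_or_nonempty with rfl | hBne
  · simp
  · refine (le_infDist hBne).2 fun b hbB => ?_
    exact (infDist_le_dist_of_mem (sup_mem_upset hx (hB hbB).2 hbB)).trans
      (dist_sup_le_dist_of_le b hyx)

theorem infDist_upset_le_hausdorffDist (hA : A ⊆ Icc 0 1) (hB : B ⊆ Icc 0 1) {x : Fin K → ℝ}
    (hx : x ∈ upset K A) : infDist x (upset K B) ≤ hausdorffDist A B := by
  obtain ⟨hxI, y, hyA, hyx⟩ := hx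
  have hI : IsBounded (Icc (0 : Fin K → ℝ) 1) := isBounded_Icc 0 1
  exact (infDist_upset_le_infDist hB hxI hyx).trans
    (infDist_le_hausdorffDist_of_mem_of_isBounded hyA (hI.subset hA) (hI.subset hB))

end Upset

theorem hausdorffDist_upset_le_general {K : ℕ} (A B : Set (Fin K → ℝ))
    (hAsub : A ⊆ Set.Icc (0 : Fin K → ℝ) 1) (hBsub : B ⊆ Set.Icc (0 : Fin K → ℝ) 1) :
    Metric.hausdorffDist (upset K A) (upset K B) ≤ Metric.hausdorffDist A B := by
  refine hausdorffDist_le_of_infDist hausdorffDist_nonneg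
    (fun x hx => infDist_upset_le_hausdorffDist hAsub hBsub hx) fun x hx => ?_
  rw [hausdorffDist_comm]
  exact infDist_upset_le_hausdorffDist hBsub hAsub hx

/-- for nonempty `A, B ⊆ [0,1]^K`, `h(up(A), up(B)) ≤ h(A, B)`. -/
theorem hausdorffDist_upset_le {K : ℕ} (A B : Set (Fin K → ℝ))
    (hAne : A.Nonempty) (hBne : B.Nonempty)
    (hAsub : A ⊆ Set.Icc (0 : Fin K → ℝ) 1) (hBsub : B ⊆ Set.Icc (0 : Fin K → ℝ) 1) :
    Metric.hausdorffDist (upset K A) (upset K B) ≤ Metric.hausdorffDist A B :=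
  hausdorffDist_upset_le_general A B hAsub hBsub
end

section
/- If V ∈ 𝓕, then Λ(Ψ(V)) ∈ 𝓕. -/
/-- The lower Pareto frontier `Λ(S)`: the minimal elements of `S` in the
coordinatewise order, i.e. the elements of `S` dominating no other element of `S`. -/
def pareto (K : ℕ) (S : Set (Fin K → ℝ)) : Set (Fin K → ℝ) :=
  {x ∈ S | ∀ y ∈ S, y ≤ x → y = x}

/-- The probability simplex over `Fin m`. -/
def simplex (m : ℕ) : Set (Fin m → ℝ) :=
  {α | (∀ a, 0 ≤ α a) ∧ ∑ a, α a = 1}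

/-- The one-stage operator `Ψ`. -/
def psi (K m n : ℕ) (hn : 0 < n) (β : ℝ) (r : Fin K → Fin m → Fin n → ℝ)
    (S : Set (Fin K → ℝ)) : Set (Fin K → ℝ) :=
  {u | ∃ α ∈ simplex m, ∃ R : Fin m → Fin n → Fin K → ℝ,
    (∀ a b, R a b ∈ S) ∧
    ∀ k, u k = Finset.univ.sup'
      (Finset.univ_nonempty_iff.mpr (Fin.pos_iff_nonempty.mp hn))
      (fun b => ∑ a, α a * (r k a b + β * R a b k))}

/-!
Write `W = up V`, which is compact and convex. Since continuation losses enter `Ψ` monotonically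
(with weight `β ≥ 0`), `Ψ(V)` and `Ψ(W)` have the same upset. `Ψ(W)` is a continuous image of
`Δ(A) × W^(A × B)`, hence compact, so its upset is closed. Mixing two strategies `(α₁, R₁)`,
`(α₂, R₂)` with weights `p, q` by playing `pα₁ + qα₂` and continuing after `(a, b)` with the
point `(pα₁(a) R₁(a,b) + qα₂(a) R₂(a,b)) / (pα₁(a) + qα₂(a))` of `W` makes every stage sum
linear, and the maximum over `b` is subadditive, so the result lies below the convex
combination: the upset is convex. Finally, when the upset of `S` is compact, minimizing the
coordinate sum over the points of the upset below `x` yields an element of `Λ(S)` below `x`;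
hence `Λ(S)` has the same (closed, convex) upset as `S`.
-/

open Finset

section Frontier

variable {K : ℕ}

lemma subset_upset_s8 {A : Set (Fin K → ℝ)} (hA : A ⊆ Set.Icc 0 1) : A ⊆ upset K A :=
  fun x hx => ⟨hA hx, x, hx, le_rfl⟩

lemma upset_eq_of_subset_of_forall_exists_le {A B : Set (Fin K → ℝ)} (hAB : A ⊆ B)
    (hBA : ∀ b ∈ B, ∃ a ∈ A, a ≤ b) : upset K A = upset K B := by
  refine Set.Subset.antisymm (fun x ⟨hx, a, ha, hax⟩ => ⟨hx, a, hAB ha, hax⟩) ?_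
  rintro x ⟨hx, b, hb, hbx⟩
  obtain ⟨a, ha, hab⟩ := hBA b hb
  exact ⟨hx, a, ha, hab.trans hbx⟩

lemma isClosed_upset_of_isCompact {C : Set (Fin K → ℝ)} (hC : IsCompact C) :
    IsClosed (upset K C) := by
  have hC' : upset K C = Set.Icc 0 1 ∩ upperClosure C := by
    ext x; simp [upset, mem_upperClosure]
  rw [hC']
  exact isClosed_Icc.inter (hC.isClosed.upperClosure_pi hC.isBounded.bddBelow)

lemma convex_upset_of_forall_exists_le_combo {A : Set (Fin K → ℝ)}
    (hA : ∀ u₁ ∈ A, ∀ u₂ ∈ A, ∀ p q : ℝ, 0 ≤ p → 0 ≤ q → p + q = 1 →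
      ∃ u ∈ A, u ≤ p • u₁ + q • u₂) :
    Convex ℝ (upset K A) := by
  rintro x ⟨hx, u₁, hu₁, hux⟩ y ⟨hy, u₂, hu₂, huy⟩ p q hp hq hpq
  obtain ⟨u, hu, hle⟩ := hA u₁ hu₁ u₂ hu₂ p q hp hq hpq
  refine ⟨convex_Icc 0 1 hx hy hp hq hpq, u, hu, hle.trans ?_⟩
  exact add_le_add (smul_le_smul_of_nonneg_left hux hp) (smul_le_smul_of_nonneg_left huy hq)

lemma eq_of_le_of_sum_le {x y : Fin K → ℝ} (hyx : y ≤ x) (hsum : ∑ k, x k ≤ ∑ k, y k) :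
    y = x := by
  have hle : ∀ k ∈ univ, y k ≤ x k := fun k _ => hyx k
  have heq := (sum_eq_sum_iff_of_le hle).1 (le_antisymm (sum_le_sum hle) hsum)
  exact funext fun k => heq k (mem_univ k)

lemma exists_mem_pareto_le {S : Set (Fin K → ℝ)} (hS : S ⊆ Set.Icc 0 1)
    (hclosed : IsClosed (upset K S)) {x : Fin K → ℝ} (hx : x ∈ upset K S) :
    ∃ y ∈ pareto K S, y ≤ x := by
  have hC : IsCompact (upset K S ∩ Set.Iic x) :=
    (isCompact_Icc.of_isClosed_subset hclosed fun z hz => hz.1).inter_right isClosed_Iic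
  obtain ⟨y, ⟨hyS, hyx⟩, hmin⟩ :=
    hC.exists_isMinOn ⟨x, hx, Set.self_mem_Iic⟩
      (continuous_finsetSum univ fun k _ => continuous_apply k).continuousOn
  have hbelow : ∀ w ∈ S, w ≤ y → w = y := fun w hw hwy =>
    eq_of_le_of_sum_le hwy (hmin ⟨subset_upset_s8 hS hw, hwy.trans hyx⟩)
  obtain ⟨z, hz, hzy⟩ := hyS.2
  obtain rfl := hbelow z hz hzy
  exact ⟨z, ⟨hz, hbelow⟩, hyx⟩

lemma memF_pareto {S : Set (Fin K → ℝ)} (hne : S.Nonempty) (hS : S ⊆ Set.Icc 0 1)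
    (hclosed : IsClosed (upset K S)) (hconv : Convex ℝ (upset K S)) :
    memF K (pareto K S) := by
  have hupset : upset K (pareto K S) = upset K S :=
    upset_eq_of_subset_of_forall_exists_le (fun x hx => hx.1) fun x hx =>
      exists_mem_pareto_le hS hclosed (subset_upset_s8 hS hx)
  obtain ⟨s, hs⟩ := hne
  obtain ⟨y, hy, -⟩ := exists_mem_pareto_le hS hclosed (subset_upset_s8 hS hs)
  exact ⟨⟨y, hy⟩, fun x hx => hS hx.1, fun u hu v hv huv => hv.2 u hu.1 huv,
    hupset ▸ hclosed, hupset ▸ hconv⟩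

end Frontier

section Psi

variable {K m n : ℕ} (hn : 0 < n) {β : ℝ} {r : Fin K → Fin m → Fin n → ℝ}

noncomputable def psiPoint (β : ℝ) (r : Fin K → Fin m → Fin n → ℝ) (α : Fin m → ℝ)
    (R : Fin m → Fin n → Fin K → ℝ) : Fin K → ℝ :=
  fun k => univ.sup' (univ_nonempty_iff.mpr (Fin.pos_iff_nonempty.mp hn))
    fun b => ∑ a, α a * (r k a b + β * R a b k)

lemma mem_psi {S : Set (Fin K → ℝ)} {u : Fin K → ℝ} :
    u ∈ psi K m n hn β r S ↔
      ∃ α ∈ stdSimplex ℝ (Fin m), ∃ R, (∀ a b, R a b ∈ S) ∧ u = psiPoint hn β r α R := by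
  simp only [psi, Set.mem_ofPred_eq, funext_iff]
  rfl

lemma le_psiPoint (α : Fin m → ℝ) (R : Fin m → Fin n → Fin K → ℝ) (k : Fin K) (b : Fin n) :
    ∑ a, α a * (r k a b + β * R a b k) ≤ psiPoint hn β r α R k :=
  le_sup' (fun b => ∑ a, α a * (r k a b + β * R a b k)) (mem_univ b)

lemma psiPoint_le_iff {α : Fin m → ℝ} {R : Fin m → Fin n → Fin K → ℝ} {k : Fin K} {c : ℝ} :
    psiPoint hn β r α R k ≤ c ↔ ∀ b, ∑ a, α a * (r k a b + β * R a b k) ≤ c := by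
  simp [psiPoint, sup'_le_iff]

lemma psi_eq_image (S : Set (Fin K → ℝ)) :
    psi K m n hn β r S = (fun p => psiPoint hn β r p.1 p.2) ''
      (stdSimplex ℝ (Fin m) ×ˢ Set.univ.pi fun _ => Set.univ.pi fun _ => S) := by
  ext u
  simp only [mem_psi, Set.mem_image, Set.mem_prod, Set.mem_univ_pi, Prod.exists]
  aesop

lemma psiPoint_mem_Icc (hβ : 0 ≤ β) (hr : ∀ k a b, r k a b ∈ Set.Icc 0 (1 - β))
    {α : Fin m → ℝ} (hα : α ∈ stdSimplex ℝ (Fin m)) {R : Fin m → Fin n → Fin K → ℝ}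
    (hR : ∀ a b, R a b ∈ Set.Icc 0 1) :
    psiPoint hn β r α R ∈ Set.Icc 0 1 := by
  have hterm : ∀ k a b, r k a b + β * R a b k ∈ Set.Icc (0 : ℝ) 1 := fun k a b => by
    obtain ⟨hr₀, hr₁⟩ := hr k a b
    have hR₀ : 0 ≤ R a b k := (hR a b).1 k
    have hR₁ : R a b k ≤ 1 := (hR a b).2 k
    constructor <;> nlinarith
  have hmix : ∀ k b, ∑ a, α a * (r k a b + β * R a b k) ∈ Set.Icc (0 : ℝ) 1 := fun k b =>
    ⟨sum_nonneg fun a _ => mul_nonneg (hα.1 a) (hterm k a b).1,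
      calc ∑ a, α a * (r k a b + β * R a b k) ≤ ∑ a, α a * 1 :=
            sum_le_sum fun a _ => mul_le_mul_of_nonneg_left (hterm k a b).2 (hα.1 a)
        _ = 1 := by simpa using hα.2⟩
  exact ⟨fun k => (hmix k ⟨0, hn⟩).1.trans (le_psiPoint hn α R k _),
    fun k => psiPoint_le_iff hn |>.2 fun b => (hmix k b).2⟩

lemma psiPoint_mono (hβ : 0 ≤ β) {α : Fin m → ℝ} (hα : ∀ a, 0 ≤ α a)
    {R R' : Fin m → Fin n → Fin K → ℝ} (hRR' : ∀ a b, R a b ≤ R' a b) :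
    psiPoint hn β r α R ≤ psiPoint hn β r α R' := fun k =>
  sup'_mono_fun fun b _ => sum_le_sum fun a _ =>
    mul_le_mul_of_nonneg_left (by gcongr; exact hRR' a b k) (hα a)

lemma psiPoint_combo_le {p q : ℝ} (hp : 0 ≤ p) (hq : 0 ≤ q) {α₁ α₂ : Fin m → ℝ}
    {R R₁ R₂ : Fin m → Fin n → Fin K → ℝ}
    (hR : ∀ a b, (p * α₁ a + q * α₂ a) • R a b = (p * α₁ a) • R₁ a b + (q * α₂ a) • R₂ a b) :
    psiPoint hn β r (p • α₁ + q • α₂) R ≤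
      p • psiPoint hn β r α₁ R₁ + q • psiPoint hn β r α₂ R₂ := by
  refine fun k => psiPoint_le_iff hn |>.2 fun b => ?_
  have hsplit : ∑ a, (p • α₁ + q • α₂) a * (r k a b + β * R a b k) =
      p * ∑ a, α₁ a * (r k a b + β * R₁ a b k) + q * ∑ a, α₂ a * (r k a b + β * R₂ a b k) := by
    rw [mul_sum, mul_sum, ← sum_add_distrib]
    refine sum_congr rfl fun a _ => ?_
    have hRk := congrFun (hR a b) k
    simp only [Pi.add_apply, Pi.smul_apply, smul_eq_mul] at hRk ⊢
    linear_combination β * hRk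
  rw [hsplit]
  exact add_le_add (mul_le_mul_of_nonneg_left (le_psiPoint hn α₁ R₁ k b) hp)
    (mul_le_mul_of_nonneg_left (le_psiPoint hn α₂ R₂ k b) hq)

lemma continuous_psiPoint :
    Continuous fun p : (Fin m → ℝ) × (Fin m → Fin n → Fin K → ℝ) => psiPoint hn β r p.1 p.2 :=
  continuous_pi fun _ => Continuous.finset_sup'_apply _ fun _ _ => by fun_prop

lemma psi_subset_Icc (hβ : 0 ≤ β) (hr : ∀ k a b, r k a b ∈ Set.Icc 0 (1 - β))
    {S : Set (Fin K → ℝ)} (hS : S ⊆ Set.Icc 0 1) :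
    psi K m n hn β r S ⊆ Set.Icc 0 1 := by
  intro u hu
  obtain ⟨α, hα, R, hR, rfl⟩ := (mem_psi hn).1 hu
  exact psiPoint_mem_Icc hn hβ hr hα fun a b => hS (hR a b)

lemma psi_nonempty (hm : 0 < m) {S : Set (Fin K → ℝ)} (hS : S.Nonempty) :
    (psi K m n hn β r S).Nonempty := by
  obtain ⟨s, hs⟩ := hS
  exact ⟨_, (mem_psi hn).2
    ⟨_, single_mem_stdSimplex ℝ ⟨0, hm⟩, fun _ _ => s, fun _ _ => hs, rfl⟩⟩

lemma psi_mono {S T : Set (Fin K → ℝ)} (hST : S ⊆ T) : psi K m n hn β r S ⊆ psi K m n hn β r T :=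
  fun _ ⟨α, hα, R, hR, hu⟩ => ⟨α, hα, R, fun a b => hST (hR a b), hu⟩

lemma isCompact_psi {S : Set (Fin K → ℝ)} (hS : IsCompact S) : IsCompact (psi K m n hn β r S) := by
  rw [psi_eq_image]
  exact ((isCompact_stdSimplex ℝ _).prod
    (isCompact_univ_pi fun _ => isCompact_univ_pi fun _ => hS)).image (continuous_psiPoint hn)

lemma exists_psi_le_of_forall_exists_le (hβ : 0 ≤ β) {S T : Set (Fin K → ℝ)}
    (hST : ∀ s ∈ S, ∃ t ∈ T, t ≤ s) {u : Fin K → ℝ} (hu : u ∈ psi K m n hn β r S) :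
    ∃ u' ∈ psi K m n hn β r T, u' ≤ u := by
  obtain ⟨α, hα, R, hR, rfl⟩ := (mem_psi hn).1 hu
  choose R' hR' hR'R using fun a b => hST (R a b) (hR a b)
  exact ⟨_, (mem_psi hn).2 ⟨α, hα, R', hR', rfl⟩, psiPoint_mono hn hβ hα.1 hR'R⟩

lemma exists_psi_le_combo {S : Set (Fin K → ℝ)} (hS : Convex ℝ S)
    {u₁ u₂ : Fin K → ℝ} (hu₁ : u₁ ∈ psi K m n hn β r S) (hu₂ : u₂ ∈ psi K m n hn β r S)
    {p q : ℝ} (hp : 0 ≤ p) (hq : 0 ≤ q) (hpq : p + q = 1) :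
    ∃ u ∈ psi K m n hn β r S, u ≤ p • u₁ + q • u₂ := by
  obtain ⟨α₁, hα₁, R₁, hR₁, rfl⟩ := (mem_psi hn).1 hu₁
  obtain ⟨α₂, hα₂, R₂, hR₂, rfl⟩ := (mem_psi hn).1 hu₂
  choose R hR hRmix using fun a b => hS.exists_mem_add_smul_eq (hR₁ a b) (hR₂ a b)
    (mul_nonneg hp (hα₁.1 a)) (mul_nonneg hq (hα₂.1 a))
  exact ⟨_, (mem_psi hn).2 ⟨_, convex_stdSimplex ℝ _ hα₁ hα₂ hp hq hpq, R, hR, rfl⟩,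
    psiPoint_combo_le hn hp hq hRmix⟩

end Psi

theorem memF_pareto_psi_general {K m n : ℕ} (hm : 0 < m) (hn : 0 < n)
    (β : ℝ) (hβ : β ∈ Set.Ico (0:ℝ) 1)
    (r : Fin K → Fin m → Fin n → ℝ) (hr : ∀ k a b, r k a b ∈ Set.Icc (0:ℝ) (1 - β))
    (V : Set (Fin K → ℝ)) (hV : memF K V) :
    memF K (pareto K (psi K m n hn β r V)) := by
  obtain ⟨hVne, hVbox, -, hWclosed, hWconv⟩ := hV
  have hW : IsCompact (upset K V) := isCompact_Icc.of_isClosed_subset hWclosed fun x hx => hx.1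
  have hupset : upset K (psi K m n hn β r V) = upset K (psi K m n hn β r (upset K V)) :=
    upset_eq_of_subset_of_forall_exists_le (psi_mono hn (subset_upset_s8 hVbox)) fun _ =>
      exists_psi_le_of_forall_exists_le hn hβ.1 fun _ hw => hw.2
  refine memF_pareto (psi_nonempty hn hm hVne) (psi_subset_Icc hn hβ.1 hr hVbox) ?_ ?_
  · exact hupset ▸ isClosed_upset_of_isCompact (isCompact_psi hn hW)
  · exact hupset ▸ convex_upset_of_forall_exists_le_combo fun _ hu₁ _ hu₂ _ _ hp hq hpq =>
      exists_psi_le_combo hn hWconv hu₁ hu₂ hp hq hpq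

/-- if `V ∈ 𝓕` then `Λ(Ψ(V)) ∈ 𝓕`. -/
theorem memF_pareto_psi {K m n : ℕ} (hK : 0 < K) (hm : 0 < m) (hn : 0 < n)
    (β : ℝ) (hβ : β ∈ Set.Ico (0:ℝ) 1)
    (r : Fin K → Fin m → Fin n → ℝ) (hr : ∀ k a b, r k a b ∈ Set.Icc (0:ℝ) (1 - β))
    (V : Set (Fin K → ℝ)) (hV : memF K V) :
    memF K (pareto K (psi K m n hn β r V)) :=
  memF_pareto_psi_general hm hn β hβ r hr V hV
end

section
/- Let G_0 = {0} and G_n = (Γ_N ∘ Φ)^n(G_0) for n ≥ 1. Then e(G_n, V*) ≤ β^n and e(V*, G_n) ≤ (1/N)·(1−β^n)/(1−β) + β^n; consequently d(V*, G_n) ≤ (1/N)·(1−β^n)/(1−β) + β^n. -/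
/-- `e(U,V)`: the least `ε ≥ 0` such that every `u ∈ U` `ε`-dominates some `v ∈ V`. -/
noncomputable def eDom (K : ℕ) (U V : Set (Fin K → ℝ)) : ℝ :=
  sInf {ε : ℝ | 0 ≤ ε ∧ ∀ u ∈ U, ∃ v ∈ V, ∀ i, v i ≤ u i + ε}

/-- The parameter set `𝒫`: vectors in `[0,1]^K` with at least one zero coordinate. -/
def paramSet (K : ℕ) : Set (Fin K → ℝ) :=
  {p | (∀ i, p i ∈ Set.Icc (0:ℝ) 1) ∧ ∃ k, p k = 0}

/-- `F(p,V) = t*·1 + p`, where `t*` is the smallest `t` such that `t·1 + p` lies in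
the upset of `V` taken in `[0,2]^K`. -/
noncomputable def Fparam (K : ℕ) (p : Fin K → ℝ) (V : Set (Fin K → ℝ)) : Fin K → ℝ :=
  fun i =>
    sInf {t : ℝ | (∀ j, 0 ≤ t + p j ∧ t + p j ≤ 2) ∧ ∃ y ∈ V, ∀ j, y j ≤ t + p j} + p i

/-- The grid `𝒫_N ⊆ 𝒫`: coordinates restricted to `{0, 1/N, …, 1}`. -/
def paramSetN (K N : ℕ) : Set (Fin K → ℝ) :=
  {p | p ∈ paramSet K ∧ ∀ i, ∃ j : ℕ, j ≤ N ∧ p i = (j : ℝ) / N}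

/-- The approximation operator `Γ_N`: Pareto frontier of the closed convex hull of
`{F(p,V) : p ∈ 𝒫_N}`. -/
noncomputable def gammaN (K N : ℕ) (V : Set (Fin K → ℝ)) : Set (Fin K → ℝ) :=
  pareto K (closure (convexHull ℝ ((fun p => Fparam K p V) '' paramSetN K N)))

open Set

namespace ParetoApprox

variable {K : ℕ}

def EpsDom (K : ℕ) (U V : Set (Fin K → ℝ)) (ε : ℝ) : Prop :=
  ∀ u ∈ U, ∃ v ∈ V, ∀ i, v i ≤ u i + ε

namespace EpsDom

variable {U U' V V' W : Set (Fin K → ℝ)} {ε ε' : ℝ}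

lemma mono (h : EpsDom K U V ε) (hU : U' ⊆ U) (hV : V ⊆ V') (hε : ε ≤ ε') :
    EpsDom K U' V' ε' := fun u hu =>
  let ⟨v, hv, hvu⟩ := h u (hU hu)
  ⟨v, hV hv, fun i => (hvu i).trans (by linarith)⟩

lemma trans (h : EpsDom K U V ε) (h' : EpsDom K V W ε') : EpsDom K U W (ε + ε') := by
  intro u hu
  obtain ⟨v, hv, hvu⟩ := h u hu
  obtain ⟨w, hw, hwv⟩ := h' v hv
  exact ⟨w, hw, fun i => by linarith [hvu i, hwv i]⟩

lemma of_le (h : ∀ u ∈ U, ∃ v ∈ V, v ≤ u) : EpsDom K U V 0 := fun u hu =>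
  let ⟨v, hv, hvu⟩ := h u hu
  ⟨v, hv, fun i => by simpa using hvu i⟩

lemma convexHull (h : EpsDom K U V ε) (hV : V ⊆ Icc 0 1) (hconv : Convex ℝ (upset K V)) :
    EpsDom K (convexHull ℝ U) V ε := by
  refine fun u hu => convexHull_min h ?_ hu
  rintro x₁ ⟨v₁, hv₁, hx₁⟩ x₂ ⟨v₂, hv₂, hx₂⟩ a b ha hb hab
  obtain ⟨-, v, hv, hvle⟩ := hconv ⟨hV hv₁, v₁, hv₁, le_rfl⟩ ⟨hV hv₂, v₂, hv₂, le_rfl⟩ ha hb hab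
  refine ⟨v, hv, fun i => (hvle i).trans ?_⟩
  have hε : a * ε + b * ε = ε := by rw [← add_mul, hab, one_mul]
  simp only [Pi.add_apply, Pi.smul_apply, smul_eq_mul]
  nlinarith [mul_le_mul_of_nonneg_left (hx₁ i) ha, mul_le_mul_of_nonneg_left (hx₂ i) hb]

end EpsDom

lemma eDom_le_of_epsDom {U V : Set (Fin K → ℝ)} {ε : ℝ} (hε : 0 ≤ ε)
    (h : ∀ δ > 0, EpsDom K U V (ε + δ)) : eDom K U V ≤ ε :=
  le_of_forall_pos_le_add fun δ hδ =>
    csInf_le ⟨0, fun _ hx => hx.1⟩ ⟨by linarith, h δ hδ⟩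

lemma exists_mem_upset_dist_le {U V : Set (Fin K → ℝ)} {ε : ℝ} (hε : 0 ≤ ε)
    (h : EpsDom K U (V ∩ Iic 1) ε) {x : Fin K → ℝ} (hx : x ∈ upset K U) :
    ∃ x' ∈ upset K V, dist x x' ≤ ε := by
  obtain ⟨⟨hx0, hx1⟩, u, hu, hux⟩ := hx
  obtain ⟨v, ⟨hv, hv1⟩, hvu⟩ := h u hu
  refine ⟨fun i => max (max (v i) (x i - ε)) 0,
    ⟨⟨fun i => le_max_right _ _, fun i => max_le (max_le (hv1 i) ?_) zero_le_one⟩,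
      v, hv, fun i => (le_max_left _ _).trans (le_max_left _ _)⟩, ?_⟩
  · linarith [hx1 i]
  · refine (dist_pi_le_iff hε).2 fun i => ?_
    have hlow : x i - ε ≤ max (max (v i) (x i - ε)) 0 :=
      (le_max_right _ _).trans (le_max_left _ _)
    have hup : max (max (v i) (x i - ε)) 0 ≤ x i + ε := by
      have hxi : 0 ≤ x i := hx0 i
      exact max_le (max_le (by linarith [hvu i, hux i]) (by linarith)) (by linarith)
    rw [Real.dist_eq, abs_sub_le_iff]
    constructor <;> linarith

lemma dF_le_of_epsDom {U V : Set (Fin K → ℝ)} {ε : ℝ} (hε : 0 ≤ ε)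
    (hUV : ∀ δ > 0, EpsDom K U (V ∩ Iic 1) (ε + δ))
    (hVU : ∀ δ > 0, EpsDom K V (U ∩ Iic 1) (ε + δ)) : dF K U V ≤ ε :=
  le_of_forall_pos_le_add fun δ hδ =>
    have hεδ : 0 ≤ ε + δ := by linarith
    Metric.hausdorffDist_le_of_mem_dist hεδ
      (fun _ hx => exists_mem_upset_dist_le hεδ (hUV δ hδ) hx)
      (fun _ hx => exists_mem_upset_dist_le hεδ (hVU δ hδ) hx)

lemma pareto_subset (S : Set (Fin K → ℝ)) : pareto K S ⊆ S := fun _ hx => hx.1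

lemma exists_mem_pareto_le {S : Set (Fin K → ℝ)} (hS : IsCompact S) {x : Fin K → ℝ}
    (hx : x ∈ S) : ∃ y ∈ pareto K S, y ≤ x := by
  have hcont : Continuous fun z : Fin K → ℝ => ∑ k, z k := by fun_prop
  obtain ⟨y, ⟨hyS, hyx⟩, hymin⟩ := (hS.inter_right isClosed_Iic).exists_isMinOn
    ⟨x, hx, le_refl x⟩ hcont.continuousOn
  refine ⟨y, ⟨hyS, fun z hzS hzy => ?_⟩, hyx⟩
  -- a point strictly below `y` in some coordinate would have a smaller coordinate sum
  by_contra hne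
  obtain ⟨k, hk⟩ := Function.ne_iff.1 hne
  have : ∑ k, z k < ∑ k, y k :=
    Finset.sum_lt_sum (fun i _ => hzy i) ⟨k, Finset.mem_univ k, lt_of_le_of_ne (hzy k) hk⟩
  exact this.not_ge (hymin ⟨hzS, hzy.trans hyx⟩)

lemma pareto_upset_eq {V : Set (Fin K → ℝ)} (hV : V ⊆ Icc 0 1)
    (hanti : ∀ u ∈ V, ∀ v ∈ V, u ≤ v → u = v) : pareto K (upset K V) = V := by
  refine Subset.antisymm ?_ fun v hv => ⟨⟨hV hv, v, hv, le_rfl⟩, ?_⟩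
  · rintro x ⟨⟨-, y, hy, hyx⟩, hmin⟩
    exact hmin y ⟨hV hy, y, hy, le_rfl⟩ hyx ▸ hy
  · rintro z ⟨-, y, hy, hyz⟩ hzv
    exact le_antisymm hzv (hanti y hy v hv (hyz.trans hzv) ▸ hyz)

section Psi

variable {m n : ℕ} {hn : 0 < n} {β : ℝ} {r : Fin K → Fin m → Fin n → ℝ}

noncomputable def psiVal (hn : 0 < n) (β : ℝ) (r : Fin K → Fin m → Fin n → ℝ)
    (α : Fin m → ℝ) (R : Fin m → Fin n → Fin K → ℝ) : Fin K → ℝ :=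
  fun k => Finset.univ.sup' (Finset.univ_nonempty_iff.mpr (Fin.pos_iff_nonempty.mp hn))
    (fun b => ∑ a, α a * (r k a b + β * R a b k))

lemma mem_psi_iff {S : Set (Fin K → ℝ)} {u : Fin K → ℝ} :
    u ∈ psi K m n hn β r S ↔
      ∃ α ∈ simplex m, ∃ R : Fin m → Fin n → Fin K → ℝ,
        (∀ a b, R a b ∈ S) ∧ psiVal hn β r α R = u := by
  refine ⟨fun ⟨α, hα, R, hR, hu⟩ => ⟨α, hα, R, hR, (funext hu).symm⟩, ?_⟩
  rintro ⟨α, hα, R, hR, rfl⟩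
  exact ⟨α, hα, R, hR, fun _ => rfl⟩

lemma psiVal_mem_psi {S : Set (Fin K → ℝ)} {α : Fin m → ℝ} {R : Fin m → Fin n → Fin K → ℝ}
    (hα : α ∈ simplex m) (hR : ∀ a b, R a b ∈ S) : psiVal hn β r α R ∈ psi K m n hn β r S :=
  mem_psi_iff.2 ⟨α, hα, R, hR, rfl⟩

lemma psi_mono {S T : Set (Fin K → ℝ)} (h : S ⊆ T) : psi K m n hn β r S ⊆ psi K m n hn β r T :=
  fun _ ⟨α, hα, R, hR, hu⟩ => ⟨α, hα, R, fun a b => h (hR a b), hu⟩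

lemma psiVal_le_add (hβ : 0 ≤ β) {α : Fin m → ℝ} (hα : α ∈ simplex m)
    {R R' : Fin m → Fin n → Fin K → ℝ} {ε : ℝ} (h : ∀ a b k, R' a b k ≤ R a b k + ε) (k : Fin K) :
    psiVal hn β r α R' k ≤ psiVal hn β r α R k + β * ε := by
  refine Finset.sup'_le _ _ fun b _ => ?_
  calc ∑ a, α a * (r k a b + β * R' a b k)
      ≤ ∑ a, (α a * (r k a b + β * R a b k) + α a * (β * ε)) :=
        Finset.sum_le_sum fun a _ => by
          nlinarith [mul_le_mul_of_nonneg_left (h a b k) (mul_nonneg (hα.1 a) hβ)]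
    _ = ∑ a, α a * (r k a b + β * R a b k) + β * ε := by
        rw [Finset.sum_add_distrib, ← Finset.sum_mul, hα.2, one_mul]
    _ ≤ psiVal hn β r α R k + β * ε :=
        add_le_add_left (Finset.le_sup' (fun b => ∑ a, α a * (r k a b + β * R a b k))
          (Finset.mem_univ b)) _

lemma psi_subset_Ici_zero (hβ : 0 ≤ β) (hr : ∀ k a b, 0 ≤ r k a b) {S : Set (Fin K → ℝ)}
    (hS : S ⊆ Ici 0) : psi K m n hn β r S ⊆ Ici 0 := by
  intro u hu k
  obtain ⟨α, hα, R, hR, rfl⟩ := mem_psi_iff.1 hu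
  refine le_trans ?_ (Finset.le_sup' (fun b => ∑ a, α a * (r k a b + β * R a b k))
    (Finset.mem_univ ⟨0, hn⟩))
  exact Finset.sum_nonneg fun a _ =>
    mul_nonneg (hα.1 a) (add_nonneg (hr k a _) (mul_nonneg hβ (hS (hR a _) k)))

lemma psi_subset_Iic_one (hβ : 0 ≤ β) (hr : ∀ k a b, r k a b ≤ 1 - β) {S : Set (Fin K → ℝ)}
    (hS : S ⊆ Iic 1) : psi K m n hn β r S ⊆ Iic 1 := by
  intro u hu k
  obtain ⟨α, hα, R, hR, rfl⟩ := mem_psi_iff.1 hu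
  refine Finset.sup'_le _ _ fun b _ => ?_
  calc ∑ a, α a * (r k a b + β * R a b k) ≤ ∑ a, α a * 1 :=
        Finset.sum_le_sum fun a _ => by
          have hR1 : R a b k ≤ 1 := hS (hR a b) k
          nlinarith [hr k a b, mul_le_mul_of_nonneg_left hR1 hβ, hα.1 a]
    _ = 1 := by simp [hα.2]

lemma isCompact_psi {S : Set (Fin K → ℝ)} (hS : IsCompact S) :
    IsCompact (psi K m n hn β r S) := by
  have himage : psi K m n hn β r S =
      (fun q : (Fin m → ℝ) × (Fin m → Fin n → Fin K → ℝ) => psiVal hn β r q.1 q.2) ''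
        (simplex m ×ˢ univ.pi fun _ => univ.pi fun _ => S) := by
    ext u
    simp only [mem_psi_iff, mem_image, mem_prod, mem_univ_pi, Prod.exists]
    aesop
  rw [himage]
  refine IsCompact.image ((isCompact_stdSimplex ℝ (Fin m)).prod
    (isCompact_univ_pi fun _ => isCompact_univ_pi fun _ => hS)) ?_
  refine continuous_pi fun k => Continuous.finset_sup'_apply _ fun b _ => ?_
  fun_prop

/-- A minimal point of `Ψ D` keeps its value when its continuation payoffs are pushed down
into `Λ D`, so it lies in `Ψ (Λ D)`. -/
lemma exists_mem_pareto_psi_pareto_le (hβ : 0 ≤ β) {D : Set (Fin K → ℝ)} (hD : IsCompact D)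
    {w : Fin K → ℝ} (hw : w ∈ psi K m n hn β r (pareto K D)) :
    ∃ y ∈ pareto K (psi K m n hn β r (pareto K D)), y ≤ w := by
  have hsub : psi K m n hn β r (pareto K D) ⊆ psi K m n hn β r D := psi_mono (pareto_subset D)
  obtain ⟨y, ⟨hyψ, hymin⟩, hyw⟩ := exists_mem_pareto_le (isCompact_psi hD) (hsub hw)
  obtain ⟨α, hα, R, hR, rfl⟩ := mem_psi_iff.1 hyψ
  choose R' hR' hR'R using fun a b => exists_mem_pareto_le hD (hR a b)
  have hle : psiVal hn β r α R' ≤ psiVal hn β r α R := fun k => by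
    simpa using psiVal_le_add hβ hα (ε := 0) (fun a b k => by simpa using hR'R a b k) k
  have heq := hymin _ (hsub (psiVal_mem_psi hα hR')) hle
  exact ⟨_, ⟨heq ▸ psiVal_mem_psi hα hR', fun z hz hzy => hymin z (hsub hz) hzy⟩, hyw⟩

lemma EpsDom.psi (hβ : 0 ≤ β) {S T : Set (Fin K → ℝ)} {ε : ℝ} (h : EpsDom K S T ε) :
    EpsDom K (psi K m n hn β r S) (psi K m n hn β r T) (β * ε) := by
  intro u hu
  obtain ⟨α, hα, R, hR, rfl⟩ := mem_psi_iff.1 hu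
  choose R' hR' hR'R using fun a b => h (R a b) (hR a b)
  exact ⟨_, psiVal_mem_psi hα hR', psiVal_le_add hβ hα fun a b k => hR'R a b k⟩

lemma subset_psi_of_fixed {V : Set (Fin K → ℝ)} (hfix : pareto K (psi K m n hn β r V) = V) :
    V ⊆ psi K m n hn β r V := by
  nth_rewrite 1 [← hfix]
  exact pareto_subset _

lemma epsDom_psi_of_fixed (hβ : 0 ≤ β) {V : Set (Fin K → ℝ)} (hV : memF K V)
    (hfix : pareto K (psi K m n hn β r V) = V) : EpsDom K (psi K m n hn β r V) V 0 := by
  obtain ⟨-, hVIcc, hanti, hclosed, -⟩ := hV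
  have hpar := pareto_upset_eq hVIcc hanti
  have hcpt : IsCompact (upset K V) := isCompact_Icc.of_isClosed_subset hclosed fun _ hx => hx.1
  refine EpsDom.of_le fun w hw => ?_
  rw [← hpar] at hw
  simpa only [hpar, hfix] using exists_mem_pareto_psi_pareto_le hβ hcpt hw

end Psi

section Grid

variable {N : ℕ} {W : Set (Fin K → ℝ)} {p : Fin K → ℝ}

lemma Fparam_le (hp : p ∈ paramSet K) {t : ℝ} (ht : ∀ j, 0 ≤ t + p j ∧ t + p j ≤ 2)
    {y : Fin K → ℝ} (hy : y ∈ W) (hyt : ∀ j, y j ≤ t + p j) (i : Fin K) :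
    Fparam K p W i ≤ t + p i := by
  obtain ⟨k, hk⟩ := hp.2
  unfold Fparam
  gcongr
  exact csInf_le ⟨0, fun s hs => by simpa [hk] using (hs.1 k).1⟩ ⟨ht, y, hy, hyt⟩

lemma Fparam_nonneg (hp : p ∈ paramSet K) : 0 ≤ Fparam K p W := by
  obtain ⟨k, hk⟩ := hp.2
  refine fun i => add_nonneg (Real.sInf_nonneg fun s hs => ?_) (hp.1 i).1
  simpa [hk] using (hs.1 k).1

lemma exists_le_Fparam_add (hp : p ∈ paramSet K) (hW : (W ∩ Iic 1).Nonempty) {δ : ℝ}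
    (hδ : 0 < δ) : ∃ y ∈ W, ∀ i, y i ≤ Fparam K p W i + δ := by
  obtain ⟨y₀, hy₀, hy₀1⟩ := hW
  -- `t = 1` is admissible since `p ∈ [0,1]^K` and `y₀ ≤ 1`
  have hne : {t : ℝ | (∀ j, 0 ≤ t + p j ∧ t + p j ≤ 2) ∧ ∃ y ∈ W, ∀ j, y j ≤ t + p j}.Nonempty :=
    ⟨1, fun j => ⟨by linarith [(hp.1 j).1], by linarith [(hp.1 j).2]⟩, y₀, hy₀,
      fun j => by linarith [(hp.1 j).1, show y₀ j ≤ 1 from hy₀1 j]⟩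
  obtain ⟨t, ⟨-, y, hy, hyt⟩, hlt⟩ := Real.lt_sInf_add_pos hne hδ
  exact ⟨y, hy, fun i => by linarith [hyt i, show Fparam K p W i = _ + p i from rfl]⟩

lemma epsDom_image_Fparam (hW : (W ∩ Iic 1).Nonempty) {δ : ℝ} (hδ : 0 < δ) :
    EpsDom K ((fun p => Fparam K p W) '' paramSetN K N) W δ := by
  rintro _ ⟨p, hp, rfl⟩
  exact exists_le_Fparam_add hp.1 hW hδ

lemma paramSetN_finite : (paramSetN K N).Finite := by
  refine ((finite_univ (α := Fin K → Fin (N + 1))).image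
    fun f i => ((f i : ℕ) : ℝ) / N).subset fun p hp => ?_
  choose j hjN hj using hp.2
  exact ⟨fun i => ⟨j i, Nat.lt_succ_of_le (hjN i)⟩, mem_univ _, funext fun i => (hj i).symm⟩

def gridHull (K N : ℕ) (W : Set (Fin K → ℝ)) : Set (Fin K → ℝ) :=
  convexHull ℝ ((fun p => Fparam K p W) '' paramSetN K N)

lemma isCompact_gridHull : IsCompact (gridHull K N W) :=
  (paramSetN_finite.image _).isCompact_convexHull (𝕜 := ℝ)

lemma gammaN_eq_pareto_gridHull : gammaN K N W = pareto K (gridHull K N W) := by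
  change pareto K (closure (gridHull K N W)) = _
  rw [isCompact_gridHull.isClosed.closure_eq]

lemma gridHull_subset_Ici_zero : gridHull K N W ⊆ Ici 0 :=
  convexHull_min (by rintro _ ⟨p, hp, rfl⟩; exact Fparam_nonneg hp.1) (convex_Ici 0)

lemma exists_paramSetN_add_eq_ceil (hK : 0 < K) {y : Fin K → ℝ} (hy : y ∈ Icc 0 1) :
    ∃ p ∈ paramSetN K N, ∃ t : ℝ, 0 ≤ t ∧ ∀ k, t + p k = ⌈y k * N⌉₊ / N := by
  set q : Fin K → ℕ := fun k => ⌈y k * N⌉₊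
  have hqN : ∀ k, q k ≤ N := fun k => Nat.ceil_le.2 <| by
    simpa using mul_le_mul_of_nonneg_right (show y k ≤ 1 from hy.2 k) (Nat.cast_nonneg N)
  have hne : (Finset.univ : Finset (Fin K)).Nonempty := ⟨⟨0, hK⟩, Finset.mem_univ _⟩
  obtain ⟨k₀, -, hk₀⟩ := Finset.exists_mem_eq_inf' hne q
  have hc : ∀ k, Finset.univ.inf' hne q ≤ q k := fun k => Finset.inf'_le q (Finset.mem_univ k)
  refine ⟨fun k => ((q k - Finset.univ.inf' hne q : ℕ) : ℝ) / N,
    ⟨⟨fun i => ⟨by positivity, div_le_one_of_le₀ ?_ (Nat.cast_nonneg N)⟩, k₀, by simp [hk₀]⟩,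
      fun i => ⟨_, (Nat.sub_le _ _).trans (hqN i), rfl⟩⟩,
    ((Finset.univ.inf' hne q : ℕ) : ℝ) / N, by positivity, fun k => ?_⟩
  · exact_mod_cast (Nat.sub_le _ _).trans (hqN i)
  · rw [← add_div, Nat.cast_sub (hc k), add_sub_cancel]

lemma EpsDom.gammaN (hK : 0 < K) (hN : 0 < N) :
    EpsDom K (W ∩ Icc 0 1) (gammaN K N W ∩ Iic 1) (1 / N) := by
  rintro y ⟨hyW, hy⟩
  have hNpos : (0 : ℝ) < N := Nat.cast_pos.2 hN
  obtain ⟨p, hp, t, ht, htp⟩ := exists_paramSetN_add_eq_ceil (N := N) hK hy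
  have hlow : ∀ k, y k ≤ t + p k := fun k => by
    rw [htp, le_div_iff₀ hNpos]; exact Nat.le_ceil _
  have hup : ∀ k, t + p k ≤ y k + 1 / N ∧ t + p k ≤ 1 := fun k => by
    have hyk : 0 ≤ y k * N := mul_nonneg (hy.1 k) hNpos.le
    have hceil : ⌈y k * N⌉₊ ≤ N :=
      Nat.ceil_le.2 (by nlinarith [show y k ≤ 1 from hy.2 k])
    rw [htp, div_le_iff₀ hNpos, div_le_one hNpos, add_mul, one_div_mul_cancel hNpos.ne']
    exact ⟨(Nat.ceil_lt_add_one hyk).le, by exact_mod_cast hceil⟩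
  have hF : Fparam K p W ∈ gridHull K N W := subset_convexHull ℝ _ ⟨p, hp, rfl⟩
  obtain ⟨g, hg, hgF⟩ := exists_mem_pareto_le isCompact_gridHull hF
  have hgt : ∀ k, g k ≤ t + p k := fun k =>
    (hgF k).trans <| Fparam_le hp.1
      (fun j => ⟨(hlow j).trans' (hy.1 j), by linarith [(hup j).2]⟩) hyW hlow k
  exact ⟨g, ⟨gammaN_eq_pareto_gridHull ▸ hg, fun k => (hgt k).trans (hup k).2⟩,
    fun k => (hgt k).trans (hup k).1⟩

end Grid

noncomputable def approxBound (β : ℝ) (N j : ℕ) : ℝ :=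
  (1 / N) * ((1 - β ^ j) / (1 - β)) + β ^ j

lemma approxBound_succ {β : ℝ} (hβ : β < 1) (N j : ℕ) :
    approxBound β N (j + 1) = β * approxBound β N j + 1 / N := by
  have : 1 - β ≠ 0 := by linarith
  rw [approxBound, approxBound]
  field_simp
  ring

lemma pow_le_approxBound {β : ℝ} (hβ : β ∈ Ico 0 1) (N j : ℕ) : β ^ j ≤ approxBound β N j := by
  have : 0 ≤ (1 - β ^ j) / (1 - β) :=
    div_nonneg (sub_nonneg.2 (pow_le_one₀ hβ.1 hβ.2.le)) (sub_nonneg.2 hβ.2.le)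
  unfold approxBound
  nlinarith [show (0 : ℝ) ≤ 1 / N by positivity]

section Iterates

variable {m n N : ℕ} {hn : 0 < n} {β : ℝ} {r : Fin K → Fin m → Fin n → ℝ}
  {V : Set (Fin K → ℝ)} {G : ℕ → Set (Fin K → ℝ)}

lemma iterate_eq_pareto (hG0 : G 0 = {0})
    (hGsucc : ∀ j, G (j + 1) = gammaN K N (pareto K (psi K m n hn β r (G j)))) (j : ℕ) :
    ∃ D, IsCompact D ∧ D ⊆ Ici 0 ∧ G j = pareto K D := by
  cases j with
  | zero =>
    refine ⟨{0}, isCompact_singleton, by simp, hG0.trans ?_⟩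
    exact (Subset.antisymm (fun x hx => ⟨hx, fun y hy _ => hy.trans hx.symm⟩)
      (pareto_subset _))
  | succ j =>
    exact ⟨_, isCompact_gridHull, gridHull_subset_Ici_zero,
      (hGsucc j).trans gammaN_eq_pareto_gridHull⟩

lemma epsDom_pareto_psi (hβ : 0 ≤ β) (hr : ∀ k a b, r k a b ∈ Icc 0 (1 - β))
    {D : Set (Fin K → ℝ)} (hD : IsCompact D) (hD0 : D ⊆ Ici 0) (hV : V ⊆ psi K m n hn β r V)
    {ε : ℝ} (h : EpsDom K V (pareto K D ∩ Iic 1) ε) :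
    EpsDom K V (pareto K (psi K m n hn β r (pareto K D)) ∩ Icc 0 1) (β * ε) := by
  have hfrontier : EpsDom K (psi K m n hn β r (pareto K D ∩ Iic 1))
      (pareto K (psi K m n hn β r (pareto K D)) ∩ Icc 0 1) 0 := by
    refine EpsDom.of_le fun w hw => ?_
    obtain ⟨y, hy, hyw⟩ := exists_mem_pareto_psi_pareto_le hβ hD
      (psi_mono inter_subset_left hw)
    have hy0 : y ∈ Ici 0 := psi_subset_Ici_zero hβ (fun k a b => (hr k a b).1)
      ((pareto_subset D).trans hD0) (pareto_subset _ hy)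
    have hw1 : w ∈ Iic 1 := psi_subset_Iic_one hβ (fun k a b => (hr k a b).2)
      inter_subset_right hw
    exact ⟨y, ⟨hy, hy0, hyw.trans hw1⟩, hyw⟩
  simpa using ((h.psi hβ).mono hV subset_rfl le_rfl).trans hfrontier

section

variable (hβ : β ∈ Ico 0 1) (hr : ∀ k a b, r k a b ∈ Icc 0 (1 - β)) (hV : memF K V)
  (hfix : pareto K (psi K m n hn β r V) = V) (hG0 : G 0 = {0})
  (hGsucc : ∀ j, G (j + 1) = gammaN K N (pareto K (psi K m n hn β r (G j))))
include hβ hr hV hfix hG0 hGsucc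

lemma epsDom_fixedPoint_iterate (hK : 0 < K) (hN : 0 < N) (j : ℕ) :
    ∀ δ > 0, EpsDom K V (G j ∩ Iic 1) (approxBound β N j + δ) := by
  induction j with
  | zero =>
    intro δ hδ v hv
    refine ⟨0, ⟨hG0 ▸ rfl, fun _ => zero_le_one⟩, fun i => ?_⟩
    have : 0 ≤ v i := (hV.2.1 hv).1 i
    simp only [approxBound, pow_zero, sub_self, zero_div, mul_zero, zero_add, Pi.zero_apply]
    linarith
  | succ j ih =>
    intro δ hδ
    obtain ⟨D, hD, hD0, hGD⟩ := iterate_eq_pareto hG0 hGsucc j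
    have hstep := (epsDom_pareto_psi hβ.1 hr hD hD0 (subset_psi_of_fixed hfix)
      (hGD ▸ ih δ hδ)).trans (EpsDom.gammaN (W := pareto K (psi K m n hn β r (pareto K D))) hK hN)
    refine hstep.mono subset_rfl (by rw [hGsucc, hGD]) ?_
    rw [approxBound_succ hβ.2]
    nlinarith [hβ.2]

lemma epsDom_iterate_fixedPoint (hK : 0 < K) (hN : 0 < N) (j : ℕ) :
    ∀ δ > 0, EpsDom K (G j) V (β ^ j + δ) := by
  induction j with
  | zero =>
    intro δ hδ u hu
    obtain ⟨v, hv⟩ := hV.1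
    refine ⟨v, hv, fun i => ?_⟩
    have : v i ≤ 1 := (hV.2.1 hv).2 i
    simp only [hG0, mem_singleton_iff] at hu
    simp only [hu, pow_zero, Pi.zero_apply]
    linarith
  | succ j ih =>
    intro δ hδ
    obtain ⟨D, hD, hD0, hGD⟩ := iterate_eq_pareto hG0 hGsucc j
    rw [hGD] at ih
    -- `Φ(G_j)` meets `[0,1]^K`, so every `F(p, Φ(G_j))` lies just above a point of `Φ(G_j)`
    have hW : (pareto K (psi K m n hn β r (pareto K D)) ∩ Iic 1).Nonempty := by
      obtain ⟨v, hv⟩ := hV.1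
      obtain ⟨y, hy, -⟩ := epsDom_pareto_psi hβ.1 hr hD hD0 (subset_psi_of_fixed hfix)
        (hGD ▸ epsDom_fixedPoint_iterate hβ hr hV hfix hG0 hGsucc hK hN j 1 one_pos) v hv
      exact ⟨y, hy.1, hy.2.2⟩
    have hWψ : EpsDom K (pareto K (psi K m n hn β r (pareto K D)))
        (psi K m n hn β r (pareto K D)) 0 :=
      EpsDom.of_le fun w hw => ⟨w, pareto_subset _ hw, le_rfl⟩
    have hchain := (epsDom_image_Fparam (N := N) hW (half_pos hδ)).trans <| hWψ.trans <|
      ((ih (δ / 2) (half_pos hδ)).psi hβ.1).trans (epsDom_psi_of_fixed hβ.1 hV hfix)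
    rw [hGsucc, hGD, gammaN_eq_pareto_gridHull]
    refine (hchain.convexHull hV.2.1 hV.2.2.2.2).mono (pareto_subset _) subset_rfl ?_
    rw [pow_succ]
    nlinarith [hβ.1, hβ.2]

end

end Iterates

end ParetoApprox

open ParetoApprox in
theorem gammaN_phi_iterates_approx_general {K m n : ℕ} (hK : 0 < K) (hn : 0 < n)
    (β : ℝ) (hβ : β ∈ Set.Ico (0:ℝ) 1)
    (r : Fin K → Fin m → Fin n → ℝ) (hr : ∀ k a b, r k a b ∈ Set.Icc (0:ℝ) (1 - β))
    (N : ℕ) (hN : 0 < N)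
    (Vstar : Set (Fin K → ℝ)) (hVstar : memF K Vstar)
    (hfix : pareto K (psi K m n hn β r Vstar) = Vstar)
    (G : ℕ → Set (Fin K → ℝ)) (hG0 : G 0 = {0})
    (hGsucc : ∀ j, G (j + 1) = gammaN K N (pareto K (psi K m n hn β r (G j)))) :
    ∀ j : ℕ,
      eDom K (G j) Vstar ≤ β ^ j ∧
      eDom K Vstar (G j) ≤ (1 / N) * ((1 - β ^ j) / (1 - β)) + β ^ j ∧
      dF K Vstar (G j) ≤ (1 / N) * ((1 - β ^ j) / (1 - β)) + β ^ j := by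
  intro j
  have hup := epsDom_iterate_fixedPoint hβ hr hVstar hfix hG0 hGsucc hK hN j
  have hdown := epsDom_fixedPoint_iterate hβ hr hVstar hfix hG0 hGsucc hK hN j
  have hpow : β ^ j ≤ 1 / N * ((1 - β ^ j) / (1 - β)) + β ^ j := pow_le_approxBound hβ N j
  have hpow0 : 0 ≤ β ^ j := pow_nonneg hβ.1 j
  refine ⟨eDom_le_of_epsDom hpow0 hup,
    eDom_le_of_epsDom (hpow0.trans hpow) fun δ hδ =>
      (hdown δ hδ).mono subset_rfl inter_subset_left le_rfl,
    dF_le_of_epsDom (hpow0.trans hpow) hdown fun δ hδ =>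
      (hup δ hδ).mono subset_rfl (fun v hv => ⟨hv, (hVstar.2.1 hv).2⟩) (by linarith)⟩

/-- with `G_0 = {0}` and `G_{j+1} = Γ_N(Φ(G_j))`, and `V*` the fixed
point of `Φ`: `e(G_j, V*) ≤ β^j`, `e(V*, G_j) ≤ (1/N)(1-β^j)/(1-β) + β^j`, and
consequently `d(V*, G_j) ≤ (1/N)(1-β^j)/(1-β) + β^j`. -/
theorem gammaN_phi_iterates_approx {K m n : ℕ} (hK : 0 < K) (hm : 0 < m) (hn : 0 < n)
    (β : ℝ) (hβ : β ∈ Set.Ico (0:ℝ) 1)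
    (r : Fin K → Fin m → Fin n → ℝ) (hr : ∀ k a b, r k a b ∈ Set.Icc (0:ℝ) (1 - β))
    (N : ℕ) (hN : 0 < N)
    (Vstar : Set (Fin K → ℝ)) (hVstar : memF K Vstar)
    (hfix : pareto K (psi K m n hn β r Vstar) = Vstar)
    (G : ℕ → Set (Fin K → ℝ)) (hG0 : G 0 = {0})
    (hGsucc : ∀ j, G (j + 1) = gammaN K N (pareto K (psi K m n hn β r (G j)))) :
    ∀ j : ℕ,
      eDom K (G j) Vstar ≤ β ^ j ∧
      eDom K Vstar (G j) ≤ (1 / N) * ((1 - β ^ j) / (1 - β)) + β ^ j ∧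
      dF K Vstar (G j) ≤ (1 / N) * ((1 - β ^ j) / (1 - β)) + β ^ j :=
  gammaN_phi_iterates_approx_general hK hn β hβ r hr N hN Vstar hVstar hfix G hG0 hGsucc
end

section
/- If S is a closed convex subset of ℝ², then its lower Pareto frontier Λ(S) is closed. -/
lemma fin2_cases' (i j k : Fin 2) (hij : i ≠ j) : k = i ∨ k = j := by
  fin_cases i <;> fin_cases j <;> fin_cases k <;> simp_all

/-- If `x` is a limit of Pareto points and some `p ∈ S` is strictly dominated by `x`
in every coordinate, we get a contradiction. -/
lemma pareto_auxA (S : Set (Fin 2 → ℝ)) (x : Fin 2 → ℝ)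
    (hx : x ∈ closure (pareto 2 S)) (p : Fin 2 → ℝ) (hp : p ∈ S)
    (hlt : ∀ k, p k < x k) : False := by
  have h0 := hlt 0
  have h1 := hlt 1
  have hε : (0 : ℝ) < min (x 0 - p 0) (x 1 - p 1) := by
    rw [lt_min_iff]; constructor <;> linarith
  obtain ⟨z, hz, hdz⟩ := Metric.mem_closure_iff.mp hx _ hε
  have hco : ∀ k, p k < z k := by
    intro k
    have h := (dist_pi_lt_iff hε).mp hdz k
    rw [Real.dist_eq, abs_lt] at h
    have h2 := h.2
    have hm0 : min (x 0 - p 0) (x 1 - p 1) ≤ x 0 - p 0 := min_le_left _ _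
    have hm1 : min (x 0 - p 0) (x 1 - p 1) ≤ x 1 - p 1 := min_le_right _ _
    rcases fin2_cases' 0 1 k (by decide) with rfl | rfl <;> linarith
  have hple : p ≤ z := fun k => (hco k).le
  have heq := hz.2 p hp hple
  exact absurd (congrFun heq 0) (ne_of_lt (hco 0))

lemma pareto_auxB (S : Set (Fin 2 → ℝ)) (hcv : Convex ℝ S) (x : Fin 2 → ℝ)
    (hx : x ∈ closure (pareto 2 S)) (y : Fin 2 → ℝ) (hy : y ∈ S)
    (hle : y ≤ x) (i j : Fin 2) (hij : i ≠ j) (hyi : y i < x i) : False := by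
  rcases lt_or_eq_of_le (hle j) with hyj | hyj
  · exact pareto_auxA S x hx y hy (fun k => by
      rcases fin2_cases' i j k hij with rfl | rfl
      exacts [hyi, hyj])
  · -- y j = x j
    have hε : (0 : ℝ) < x i - y i := by linarith
    obtain ⟨z, hz, hdz⟩ := Metric.mem_closure_iff.mp hx _ hε
    have hdi := (dist_pi_lt_iff hε).mp hdz i
    have hdj := (dist_pi_lt_iff hε).mp hdz j
    rw [Real.dist_eq, abs_lt] at hdi hdj
    rcases le_or_gt (x j) (z j) with hzj | hzj
    · have hyz : y ≤ z := by
        intro k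
        rcases fin2_cases' i j k hij with rfl | rfl
        · linarith [hdi.2]
        · rw [hyj]; exact hzj
      have heq := hz.2 y hy hyz
      have hYi : y i = z i := congrFun heq i
      linarith [hdi.2]
    · have hm : (1/2 : ℝ) • y + (1/2 : ℝ) • z ∈ S :=
        hcv hy hz.1 (by norm_num) (by norm_num) (by norm_num)
      refine pareto_auxA S x hx _ hm (fun k => ?_)
      rcases fin2_cases' i j k hij with rfl | rfl <;>
        simp only [Pi.add_apply, Pi.smul_apply, smul_eq_mul]
      · linarith [hdi.1]
      · linarith [hyj, hzj]

/-- the lower Pareto frontier of a closed convex subset of `ℝ²`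
is closed. -/
theorem pareto_isClosed_of_convex_R2 (S : Set (Fin 2 → ℝ))
    (hcl : IsClosed S) (hcv : Convex ℝ S) :
    IsClosed (pareto 2 S) := by
  apply isClosed_of_closure_subset
  intro x hx
  have hsub : pareto 2 S ⊆ S := fun z hz => hz.1
  have hxS : x ∈ S := hcl.closure_subset_iff.mpr Set.Subset.rfl
      (closure_mono hsub hx)
  refine ⟨hxS, fun y hy hle => ?_⟩
  by_contra hne
  obtain ⟨i, hi⟩ : ∃ i, y i ≠ x i := by
    by_contra h; push_neg at h; exact hne (funext h)
  have hyi : y i < x i := lt_of_le_of_ne (hle i) hi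
  have hij : i ≠ (if i = 0 then 1 else 0) := by fin_cases i <;> simp
  exact pareto_auxB S hcv x hx y hy hle i _ hij hyi
end

section
/- Let S ⊆ ℝ³ be the convex hull of {(0,0,1)} ∪ {(5,y,z) : (y−1)² + (z−1)² ≤ 1, z ≤ 1}. Then S is compact and convex, but its lower Pareto frontier Λ(S) is not closed. -/
/-- The solid cone: convex hull of the apex `(0,0,1)` and the semicircular disc
`{(5,y,z) : (y-1)² + (z-1)² ≤ 1, z ≤ 1}`. -/
noncomputable def coneSet : Set (Fin 3 → ℝ) :=
  convexHull ℝ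
    ({![(0:ℝ), 0, 1]} ∪
      {x : Fin 3 → ℝ | x 0 = 5 ∧ (x 1 - 1) ^ 2 + (x 2 - 1) ^ 2 ≤ 1 ∧ x 2 ≤ 1})

open Set Filter Topology Real Matrix

theorem dotProduct_lt_dotProduct_of_pos_left {n R : Type*} [Fintype n] [Ring R] [PartialOrder R]
    [IsStrictOrderedRing R] {u v w : n → R} (huv : u < v) (hw : ∀ i, 0 < w i) :
    w ⬝ᵥ u < w ⬝ᵥ v := by
  obtain ⟨hle, i, hi⟩ := Pi.lt_def.1 huv
  exact Finset.sum_lt_sum (fun j _ => mul_le_mul_of_nonneg_left (hle j) (hw j).le)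
    ⟨i, Finset.mem_univ _, mul_lt_mul_of_pos_left hi (hw i)⟩

theorem mem_pareto_of_isMinOn_dotProduct {K : ℕ} {S : Set (Fin K → ℝ)} {w x : Fin K → ℝ}
    (hw : ∀ i, 0 < w i) (hx : x ∈ S) (hmin : IsMinOn (w ⬝ᵥ ·) S x) : x ∈ pareto K S :=
  ⟨hx, fun _ hy hyx => by_contra fun hne =>
    (hmin hy).not_gt (dotProduct_lt_dotProduct_of_pos_left (lt_of_le_of_ne hyx hne) hw)⟩

theorem isMinOn_dotProduct_convexHull {n : Type*} [Fintype n] {s : Set (n → ℝ)} {w x : n → ℝ}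
    (hmin : ∀ y ∈ s, w ⬝ᵥ x ≤ w ⬝ᵥ y) : IsMinOn (w ⬝ᵥ ·) (convexHull ℝ s) x :=
  convexHull_min hmin <| convex_halfSpace_ge
    ⟨fun u v => dotProduct_add w u v, fun c u => dotProduct_smul c w u⟩ _

theorem IsCompact.convexJoin {E : Type*} [AddCommGroup E] [Module ℝ E] [TopologicalSpace E]
    [ContinuousAdd E] [ContinuousSMul ℝ E] {s t : Set E} (hs : IsCompact s) (ht : IsCompact t) :
    IsCompact (_root_.convexJoin ℝ s t) := by
  have : _root_.convexJoin ℝ s t =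
      (fun p : E × E × ℝ => (1 - p.2.2) • p.1 + p.2.2 • p.2.1) '' (s ×ˢ t ×ˢ Icc 0 1) := by
    ext z
    simp only [mem_convexJoin, segment_eq_image, mem_image, mem_prod, mem_Icc, Prod.exists]
    aesop
  rw [this]
  exact (hs.prod (ht.prod isCompact_Icc)).image (by fun_prop)

def coneDisc : Set (Fin 3 → ℝ) :=
  {x | x 0 = 5 ∧ (x 1 - 1) ^ 2 + (x 2 - 1) ^ 2 ≤ 1 ∧ x 2 ≤ 1}

theorem convex_coneDisc : Convex ℝ coneDisc := by
  rintro x ⟨hx0, hx12, hx2⟩ y ⟨hy0, hy12, hy2⟩ a b ha hb hab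
  simp only [coneDisc, mem_ofPred_eq, Pi.add_apply, Pi.smul_apply, smul_eq_mul, hx0, hy0]
  obtain rfl : b = 1 - a := by linarith
  refine ⟨by linarith, ?_, by nlinarith⟩
  nlinarith [mul_le_mul_of_nonneg_left hx12 ha, mul_le_mul_of_nonneg_left hy12 hb,
    mul_nonneg (mul_nonneg ha hb) (sq_nonneg (x 1 - y 1)),
    mul_nonneg (mul_nonneg ha hb) (sq_nonneg (x 2 - y 2))]

theorem isCompact_coneDisc : IsCompact coneDisc := by
  refine (isCompact_Icc (a := ![5, 0, 0]) (b := ![5, 2, 2])).of_isClosed_subset ?_ ?_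
  · simp only [coneDisc, ofPred_and]
    apply_rules [IsClosed.inter, isClosed_eq, isClosed_le] <;> fun_prop
  · rintro x ⟨hx0, hx12, -⟩
    have h1 : (x 1 - 1) ^ 2 ≤ 1 := by nlinarith [sq_nonneg (x 2 - 1)]
    have h2 : (x 2 - 1) ^ 2 ≤ 1 := by nlinarith [sq_nonneg (x 1 - 1)]
    refine ⟨fun i => ?_, fun i => ?_⟩ <;> fin_cases i <;> simp [hx0] <;> nlinarith

theorem isCompact_coneSet : IsCompact coneSet := by
  have hdisc : ![(5 : ℝ), 1, 1] ∈ coneDisc := ⟨rfl, by simp, by simp⟩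
  change IsCompact (convexHull ℝ ({![(0 : ℝ), 0, 1]} ∪ coneDisc))
  rw [convexHull_union (singleton_nonempty _) ⟨_, hdisc⟩, convexHull_singleton,
    convex_coneDisc.convexHull_eq]
  exact isCompact_singleton.convexJoin isCompact_coneDisc

noncomputable def arcPoint (θ : ℝ) : Fin 3 → ℝ := ![5, 1 - cos θ, 1 - sin θ]

theorem continuous_arcPoint : Continuous arcPoint := by
  unfold arcPoint; fun_prop

/-- The plane `w ⬝ᵥ x = sin θ` passes through the apex and is tangent to the base disc at
`arcPoint θ`. -/
theorem isMinOn_arcPoint (θ : ℝ) :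
    IsMinOn (![(1 - cos θ) / 5, cos θ, sin θ] ⬝ᵥ ·) coneSet (arcPoint θ) := by
  refine isMinOn_dotProduct_convexHull ?_
  have hθ := cos_sq_add_sin_sq θ
  rintro y (rfl | ⟨hy0, hy12, -⟩) <;>
    simp only [vec3_dotProduct, arcPoint, cons_val_zero, cons_val_one, cons_val_two, head_cons,
      tail_cons]
  · nlinarith
  · rw [hy0]
    nlinarith [sq_nonneg (y 1 - 1 + cos θ), sq_nonneg (y 2 - 1 + sin θ)]

theorem arcPoint_mem_pareto {θ : ℝ} (h0 : 0 < θ) (h1 : θ < π / 2) :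
    arcPoint θ ∈ pareto 3 coneSet := by
  have hcos : 0 < cos θ := cos_pos_of_mem_Ioo ⟨by linarith [pi_pos], h1⟩
  have hsin : 0 < sin θ := sin_pos_of_pos_of_lt_pi h0 (by linarith [pi_pos])
  have hcos1 : cos θ < 1 := by nlinarith [cos_sq_add_sin_sq θ]
  refine mem_pareto_of_isMinOn_dotProduct (fun i => ?_) ?_ (isMinOn_arcPoint θ)
  · fin_cases i <;> simp [hcos, hsin, hcos1]
  · exact subset_convexHull ℝ _
      (Or.inr ⟨rfl, by simp [arcPoint], by simpa [arcPoint] using hsin.le⟩)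

theorem arcPoint_zero_notMem_pareto : arcPoint 0 ∉ pareto 3 coneSet := by
  rintro ⟨-, hmin⟩
  have hapex : ![(0 : ℝ), 0, 1] ∈ coneSet := subset_convexHull ℝ _ (Or.inl rfl)
  have hle : ![(0 : ℝ), 0, 1] ≤ arcPoint 0 := by
    intro i; fin_cases i <;> simp [arcPoint]
  simpa [arcPoint] using congrFun (hmin _ hapex hle) 0

/-- `coneSet` is a compact convex subset of `ℝ³` whose lower Pareto
frontier is not closed. -/
theorem coneSet_pareto_not_closed :
    IsCompact coneSet ∧ Convex ℝ coneSet ∧ ¬ IsClosed (pareto 3 coneSet) := by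
  refine ⟨isCompact_coneSet, convex_convexHull ℝ _, fun hclosed => arcPoint_zero_notMem_pareto ?_⟩
  have hlim : Tendsto arcPoint (𝓝[>] 0) (𝓝 (arcPoint 0)) :=
    continuous_arcPoint.continuousWithinAt
  exact hclosed.mem_of_tendsto hlim <| eventually_of_mem (Ioo_mem_nhdsGT pi_div_two_pos)
    fun θ hθ => arcPoint_mem_pareto hθ.1 hθ.2
end

section
/- Let V ∈ 𝓕, u ∈ V, p ∈ 𝒫, and let a = min_{t∈ℝ} ‖u − (t·1 + p)‖_∞ be the ℓ∞ distance from u to the line {t·1 + p : t ∈ ℝ}. Then ‖u − F(p, V)‖_∞ ≤ 2a. -/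
/-- for `V ∈ 𝓕`, `u ∈ V`, `p ∈ 𝒫`, if `a` is the ℓ∞ distance from `u`
to the line `{t·1 + p : t ∈ ℝ}`, then `‖u − F(p,V)‖_∞ ≤ 2a`. -/
theorem dist_Fparam_le_two_mul {K : ℕ} (V : Set (Fin K → ℝ)) (hV : memF K V)
    (u : Fin K → ℝ) (hu : u ∈ V) (p : Fin K → ℝ) (hp : p ∈ paramSet K)
    (a : ℝ) (ha : a = ⨅ t : ℝ, ‖u - (fun i => t + p i)‖) :
    ‖u - Fparam K p V‖ ≤ 2 * a := by
  obtain ⟨hpIcc, k₀, hk₀⟩ := hp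
  have hne : (Finset.univ : Finset (Fin K)).Nonempty := ⟨k₀, Finset.mem_univ _⟩
  set M := Finset.univ.sup' hne (fun j => u j - p j) with hM
  set m := Finset.univ.inf' hne (fun j => u j - p j) with hm
  have huIcc := hV.2.1 hu
  have hu0 : ∀ j, 0 ≤ u j := fun j => huIcc.1 j
  have hu1 : ∀ j, u j ≤ 1 := fun j => huIcc.2 j
  have hMle : ∀ j, u j - p j ≤ M := fun j => by
    rw [hM]; exact Finset.le_sup' (fun j => u j - p j) (Finset.mem_univ j)
  have hmle : ∀ j, m ≤ u j - p j := fun j => by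
    rw [hm]; exact Finset.inf'_le (fun j => u j - p j) (Finset.mem_univ j)
  have hmM : m ≤ M := le_trans (hmle k₀) (hMle k₀)
  set S := {t : ℝ | (∀ j, 0 ≤ t + p j ∧ t + p j ≤ 2) ∧ ∃ y ∈ V, ∀ j, y j ≤ t + p j}
    with hSdef
  have hM1 : M ≤ 1 := by
    apply Finset.sup'_le
    intro j _
    have := (hpIcc j).1
    linarith [hu1 j]
  have hMS : M ∈ S := by
    refine ⟨fun j => ⟨?_, ?_⟩, u, hu, fun j => by linarith [hMle j]⟩
    · linarith [hMle j, hu0 j]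
    · linarith [(hpIcc j).2]
  have hSlb : ∀ t ∈ S, m ≤ t := by
    intro t ht
    by_contra hlt
    push_neg at hlt
    obtain ⟨_, y, hy, hyle⟩ := ht
    have hylt : ∀ j, y j < u j := by
      intro j
      have := hmle j
      have := hyle j
      linarith
    have hyu : y ≤ u := fun j => (hylt j).le
    have := hV.2.2.1 y hy u hu hyu
    exact absurd (this ▸ hylt k₀) (lt_irrefl _)
  have hSne : S.Nonempty := ⟨M, hMS⟩
  have hbdd : BddBelow S := ⟨m, hSlb⟩
  set t0 := sInf S with ht0
  have ht0M : t0 ≤ M := csInf_le hbdd hMS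
  have ht0m : m ≤ t0 := le_csInf hSne hSlb
  have ha2 : (M - m) / 2 ≤ a := by
    rw [ha]
    apply le_ciInf
    intro t
    obtain ⟨j, _, hj⟩ := Finset.exists_mem_eq_sup' hne (fun j => u j - p j)
    obtain ⟨l, _, hl⟩ := Finset.exists_mem_eq_inf' hne (fun j => u j - p j)
    rcases le_total t ((M + m) / 2) with h | h
    · have h1 : (M - m) / 2 ≤ |u j - (t + p j)| := by
        rw [show u j - (t + p j) = (u j - p j) - t by ring, ← hj]
        rw [abs_of_nonneg (by linarith)]
        linarith
      calc (M - m) / 2 ≤ |u j - (t + p j)| := h1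
        _ = ‖(u - fun i => t + p i) j‖ := by simp [Real.norm_eq_abs]
        _ ≤ ‖u - fun i => t + p i‖ := norm_le_pi_norm _ j
    · have h1 : (M - m) / 2 ≤ |u l - (t + p l)| := by
        rw [show u l - (t + p l) = (u l - p l) - t by ring, ← hl]
        rw [abs_of_nonpos (by linarith), neg_sub]
        linarith
      calc (M - m) / 2 ≤ |u l - (t + p l)| := h1
        _ = ‖(u - fun i => t + p i) l‖ := by simp [Real.norm_eq_abs]
        _ ≤ ‖u - fun i => t + p i‖ := norm_le_pi_norm _ l
  have hFeq : Fparam K p V = fun i => t0 + p i := rfl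
  have hnorm : ‖u - Fparam K p V‖ ≤ M - m := by
    rw [hFeq]
    refine (pi_norm_le_iff_of_nonneg (by linarith)).mpr fun i => ?_
    have hcoord : (u - fun i => t0 + p i) i = u i - (t0 + p i) := rfl
    rw [hcoord, Real.norm_eq_abs, abs_le]
    constructor
    · linarith [hmle i]
    · linarith [hMle i]
  linarith
end

section
/- The function f : [0,2] → ℝ defined by f(x) = −2√(2x) + x + 2 satisfies f(0) = 2, f(2) = 0, f(1/2) = 1/2, and the fixed-point relation f(x) = f(4x)/2 + 1 − x for all x ∈ [0, 1/2]. -/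
/-! Since `√(2 · 4x) = 2√(2x)`, halving the frontier value at `4x` halves both its linear and its
square-root part, and the relation reduces to an identity between linear terms. -/

namespace ExpertFrontier

noncomputable def frontierCurve (x : ℝ) : ℝ := -2 * √(2 * x) + x + 2

lemma sqrt_four_mul (y : ℝ) : √(4 * y) = 2 * √y := by
  rw [Real.sqrt_mul (by norm_num), show (4 : ℝ) = 2 ^ 2 by norm_num, Real.sqrt_sq zero_le_two]

lemma frontierCurve_zero : frontierCurve 0 = 2 := by
  simp [frontierCurve]

lemma frontierCurve_two : frontierCurve 2 = 0 := by
  norm_num [frontierCurve, sqrt_four_mul]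

lemma frontierCurve_half : frontierCurve (1 / 2) = 1 / 2 := by
  norm_num [frontierCurve]

lemma frontierCurve_eq_half_frontierCurve_four_mul (x : ℝ) :
    frontierCurve x = frontierCurve (4 * x) / 2 + 1 - x := by
  rw [frontierCurve, frontierCurve, mul_left_comm, sqrt_four_mul]
  ring

end ExpertFrontier

/-- the function `f(x) = −2√(2x) + x + 2` on `[0,2]` satisfies
`f(0) = 2`, `f(2) = 0`, `f(1/2) = 1/2`, and the fixed-point relation
`f(x) = f(4x)/2 + 1 − x` for all `x ∈ [0, 1/2]`. -/
theorem expert_frontier_fixed_point (f : ℝ → ℝ)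
    (hf : ∀ x ∈ Set.Icc (0:ℝ) 2, f x = -2 * Real.sqrt (2 * x) + x + 2) :
    f 0 = 2 ∧ f 2 = 0 ∧ f (1/2) = 1/2 ∧
      ∀ x ∈ Set.Icc (0:ℝ) (1/2), f x = f (4 * x) / 2 + 1 - x := by
  have hf' : ∀ x ∈ Set.Icc (0:ℝ) 2, f x = ExpertFrontier.frontierCurve x := hf
  refine ⟨?_, ?_, ?_, ?_⟩
  · rw [hf' 0 (by norm_num), ExpertFrontier.frontierCurve_zero]
  · rw [hf' 2 (by norm_num), ExpertFrontier.frontierCurve_two]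
  · rw [hf' (1 / 2) (by norm_num), ExpertFrontier.frontierCurve_half]
  · rintro x ⟨hx0, hx⟩
    rw [hf' x ⟨hx0, by linarith⟩, hf' (4 * x) ⟨by linarith, by linarith⟩]
    exact ExpertFrontier.frontierCurve_eq_half_frontierCurve_four_mul x
end

section
/- For any U, V ∈ 𝓕 and any p ∈ 𝒫, ‖F(p, U) − F(p, V)‖_∞ ≤ d(U, V). -/
open Set Metric

def feasibleShifts (K : ℕ) (p : Fin K → ℝ) (V : Set (Fin K → ℝ)) : Set ℝ :=
  {t : ℝ | (∀ j, 0 ≤ t + p j ∧ t + p j ≤ 2) ∧ ∃ y ∈ V, ∀ j, y j ≤ t + p j}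

section

variable {K : ℕ} {p : Fin K → ℝ} {U V : Set (Fin K → ℝ)}

lemma upset_subset_Icc : upset K V ⊆ Icc 0 1 := fun _ hx => hx.1

lemma isBounded_upset : Bornology.IsBounded (upset K V) :=
  (isBounded_Icc 0 1).subset upset_subset_Icc

lemma upset_nonempty_s19 (hV : V.Nonempty) (hV1 : V ⊆ Icc 0 1) : (upset K V).Nonempty := by
  obtain ⟨y, hy⟩ := hV
  exact ⟨y, hV1 hy, y, hy, le_rfl⟩

lemma one_mem_feasibleShifts (hV : V.Nonempty) (hV1 : V ⊆ Icc 0 1) (hp : ∀ j, p j ∈ Icc 0 1) :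
    1 ∈ feasibleShifts K p V := by
  obtain ⟨y, hy⟩ := hV
  refine ⟨fun j => ⟨by linarith [(hp j).1], by linarith [(hp j).2]⟩, y, hy, fun j => ?_⟩
  have hy1 : y j ≤ 1 := (hV1 hy).2 j
  linarith [(hp j).1]

lemma bddBelow_feasibleShifts (k : Fin K) : BddBelow (feasibleShifts K p V) :=
  ⟨-p k, fun _ ht => by linarith [(ht.1 k).1]⟩

lemma min_one_mem_upset_of_mem_feasibleShifts (hV1 : V ⊆ Icc 0 1) {t : ℝ}
    (ht : t ∈ feasibleShifts K p V) :
    (fun j => min (t + p j) 1) ∈ upset K V := by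
  obtain ⟨hbd, y, hy, hyle⟩ := ht
  exact ⟨⟨fun j => le_min (hbd j).1 zero_le_one, fun j => min_le_right _ _⟩, y, hy,
    fun j => le_min (hyle j) ((hV1 hy).2 j)⟩

lemma min_add_mem_feasibleShifts (hp : ∀ j, p j ∈ Icc 0 1) {t D : ℝ}
    (ht : t ∈ feasibleShifts K p V) {u : Fin K → ℝ} (hu : u ∈ upset K U)
    (huD : dist u (fun j => min (t + p j) 1) ≤ D) :
    min (t + D) 1 ∈ feasibleShifts K p U := by
  obtain ⟨⟨-, hu1⟩, z, hz, hzu⟩ := hu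
  have hD : 0 ≤ D := dist_nonneg.trans huD
  refine ⟨fun j => ⟨?_, ?_⟩, z, hz, fun j => ?_⟩
  · rw [← min_add_add_right]
    exact le_min (by linarith [(ht.1 j).1]) (by linarith [(hp j).1])
  · linarith [min_le_right (t + D) 1, (hp j).2]
  · have huj : u j - min (t + p j) 1 ≤ D :=
      (Real.sub_le_dist _ _).trans ((dist_le_pi_dist u _ j).trans huD)
    have huj1 : u j ≤ 1 := hu1 j
    rw [← min_add_add_right]
    refine (hzu j).trans (le_min ?_ ?_)
    · linarith [min_le_left (t + p j) 1]
    · linarith [(hp j).1]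

lemma sInf_feasibleShifts_le_add_dF (hU : U.Nonempty) (hU1 : U ⊆ Icc 0 1) (hV : V.Nonempty)
    (hV1 : V ⊆ Icc 0 1) (hp : ∀ j, p j ∈ Icc 0 1) (hbdd : BddBelow (feasibleShifts K p U)) :
    sInf (feasibleShifts K p U) ≤ sInf (feasibleShifts K p V) + dF K U V := by
  have hfin : hausdorffEDist (upset K V) (upset K U) ≠ ⊤ :=
    hausdorffEDist_ne_top_of_nonempty_of_bounded (upset_nonempty_s19 hV hV1) (upset_nonempty_s19 hU hU1)
      isBounded_upset isBounded_upset
  refine le_of_forall_pos_le_add fun ε hε => ?_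
  obtain ⟨t, ht, htlt⟩ :=
    Real.lt_sInf_add_pos ⟨1, one_mem_feasibleShifts hV hV1 hp⟩ (half_pos hε)
  have hx := min_one_mem_upset_of_mem_feasibleShifts hV1 ht
  have hinf : infDist _ (upset K U) ≤ dF K U V :=
    (infDist_le_hausdorffDist_of_mem hx hfin).trans_eq hausdorffDist_comm
  obtain ⟨u, hu, hxu⟩ := (infDist_lt_iff (upset_nonempty_s19 hU hU1)).1
    (hinf.trans_lt (lt_add_of_pos_right _ (half_pos hε)))
  have hmem := min_add_mem_feasibleShifts hp ht hu (dist_comm u _ ▸ hxu.le)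
  linarith [csInf_le hbdd hmem, min_le_left (t + (dF K U V + ε / 2)) 1]

end

/-- for `U, V ∈ 𝓕` and `p ∈ 𝒫`, `‖F(p,U) − F(p,V)‖_∞ ≤ d(U,V)`. -/
theorem Fparam_lipschitz {K : ℕ} (U V : Set (Fin K → ℝ))
    (hU : memF K U) (hV : memF K V) (p : Fin K → ℝ) (hp : p ∈ paramSet K) :
    ‖Fparam K p U - Fparam K p V‖ ≤ dF K U V := by
  obtain ⟨hp01, k, -⟩ := hp
  have hUV := sInf_feasibleShifts_le_add_dF hU.1 hU.2.1 hV.1 hV.2.1 hp01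
    (bddBelow_feasibleShifts k)
  have hVU := sInf_feasibleShifts_le_add_dF hV.1 hV.2.1 hU.1 hU.2.1 hp01
    (bddBelow_feasibleShifts k)
  rw [show dF K V U = dF K U V from hausdorffDist_comm] at hVU
  refine (pi_norm_le_iff_of_nonneg (hausdorffDist_nonneg : 0 ≤ dF K U V)).2 fun i => ?_
  change |sInf (feasibleShifts K p U) + p i - (sInf (feasibleShifts K p V) + p i)| ≤ dF K U V
  rw [abs_sub_le_iff]
  constructor <;> linarith
end
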